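/- arXiv:1202.2560 — 6 statements merged into one kernel-verified Lean document; each statement's English description precedes it below -/
import Mathlib

section
/- Let P_i = {n : 2^i ≤ n < 2^(i+1)}. Suppose every element missing from X ⊆ ℕ lies in some 'gap': a final segment of some P_i of length 2^(i-e_i). If for every e there are only finitely many i with gap size exponent e_i ≤ e (i.e., only finitely many gaps of size ≥ 2^(-e)), then X has density 1. -/
open Filter

/-- The counting function: number of elements of `A` below `n`, divided by `n`. -/
noncomputable def partialDensity (A : Set ℕ) (n : ℕ) : ℝ := ((A ∩ Set.Iio n).ncard : ℝ) / n

/-- `A ⊆ ℕ` has density `d` if the partial densities tend to `d`. -/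
def HasDensity (A : Set ℕ) (d : ℝ) : Prop :=
  Tendsto (partialDensity A) atTop (nhds d)

/-- `A ⊆ ℕ` has density 1. -/
def Density1 (A : Set ℕ) : Prop := HasDensity A 1

private lemma sum_two_pow_lt (m : ℕ) : ∑ i ∈ Finset.range m, 2 ^ i < 2 ^ m := by
  induction m with
  | zero => simp
  | succ k ih =>
    rw [Finset.sum_range_succ, pow_succ]
    omega

private lemma aux_sum (e m : ℕ) :
    ∑ i ∈ Finset.range m, 2 ^ e * 2 ^ (i - e) ≤ 2 ^ e * e + 2 ^ m := by
  classical
  rw [← Finset.sum_filter_add_sum_filter_not (Finset.range m) (· < e)]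
  have h1 : ∑ i ∈ (Finset.range m).filter (· < e), 2 ^ e * 2 ^ (i - e) ≤ 2 ^ e * e := by
    calc ∑ i ∈ (Finset.range m).filter (· < e), 2 ^ e * 2 ^ (i - e)
        = ∑ _i ∈ (Finset.range m).filter (· < e), 2 ^ e := by
          apply Finset.sum_congr rfl
          intro i hi
          simp only [Finset.mem_filter] at hi
          rw [Nat.sub_eq_zero_of_le hi.2.le, pow_zero, mul_one]
      _ = ((Finset.range m).filter (· < e)).card * 2 ^ e := Finset.sum_const _
      _ ≤ e * 2 ^ e := by
          gcongr
          calc ((Finset.range m).filter (· < e)).card ≤ (Finset.range e).card := by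
                apply Finset.card_le_card
                intro i hi
                simp only [Finset.mem_filter, Finset.mem_range] at hi ⊢
                exact hi.2
            _ = e := Finset.card_range e
      _ = 2 ^ e * e := Nat.mul_comm _ _
  have h2 : ∑ i ∈ (Finset.range m).filter (fun i => ¬ i < e), 2 ^ e * 2 ^ (i - e) ≤ 2 ^ m := by
    calc ∑ i ∈ (Finset.range m).filter (fun i => ¬ i < e), 2 ^ e * 2 ^ (i - e)
        = ∑ i ∈ (Finset.range m).filter (fun i => ¬ i < e), 2 ^ i := by
          apply Finset.sum_congr rfl
          intro i hi
          simp only [Finset.mem_filter, not_lt] at hi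
          rw [← pow_add, Nat.add_sub_cancel' hi.2]
      _ ≤ ∑ i ∈ Finset.range m, 2 ^ i :=
          Finset.sum_le_sum_of_subset (Finset.filter_subset _ _)
      _ ≤ 2 ^ m := (sum_two_pow_lt m).le
  omega

/-- Suppose the complement of `X` is the union, over `i`, of a gap at the end of the block
`P_i = [2^i, 2^(i+1))`, where the gap at `P_i` has length `g i`, each gap being either
empty or of size `2^(-e)` (i.e. of length `2^(i-e)`) for some `e`.  If, for each `e`,
only finitely many gaps have size at least `2^(-e)`, then `X` has density 1. -/
theorem density1_of_finitely_many_large_gaps (X : Set ℕ) (g : ℕ → ℕ)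
    (hform : ∀ i, g i = 0 ∨ ∃ e, e ≤ i ∧ g i = 2 ^ (i - e))
    (hcompl : Xᶜ = ⋃ i, Set.Ico (2 ^ (i + 1) - g i) (2 ^ (i + 1)))
    (hfin : ∀ e, {i : ℕ | 2 ^ (i - e) ≤ g i}.Finite) :
    Density1 X := by
  classical
  have hgle : ∀ i, g i ≤ 2 ^ i := by
    intro i
    rcases hform i with h | ⟨e', _, hgi⟩
    · rw [h]; exact Nat.zero_le _
    · rw [hgi]; exact Nat.pow_le_pow_right (by norm_num) (Nat.sub_le i e')
  rw [Density1, HasDensity, Metric.tendsto_atTop]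
  intro ε hε
  obtain ⟨e, he⟩ : ∃ e : ℕ, (4 / ε : ℝ) < 2 ^ e := pow_unbounded_of_one_lt _ one_lt_two
  have h2epos : (0:ℝ) < 2 ^ e := by positivity
  have h2e : (2:ℝ) / 2 ^ e < ε / 2 := by
    rw [div_lt_iff₀ hε] at he
    rw [div_lt_div_iff₀ h2epos (by norm_num)]
    linarith
  set S : Finset ℕ := (hfin e).toFinset with hS
  set C : ℕ := ∑ i ∈ S, g i with hC
  -- key counting bound
  have key : ∀ n : ℕ, 1 ≤ n →
      2 ^ e * (Xᶜ ∩ Set.Iio n).ncard ≤ 2 ^ e * (C + e) + 2 * n := by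
    intro n hn
    set L := Nat.log 2 n with hL
    set B : Finset ℕ :=
      (Finset.range (L+1)).biUnion (fun i => Finset.Ico (2^(i+1) - g i) (2^(i+1))) with hB
    have hsub : Xᶜ ∩ Set.Iio n ⊆ (B : Set ℕ) := by
      intro m hm
      obtain ⟨hmX, hmn⟩ := hm
      rw [hcompl] at hmX
      obtain ⟨i, hmi⟩ := Set.mem_iUnion.mp hmX
      obtain ⟨h1, h2⟩ := hmi
      have hgi := hgle i
      have hpowi : 2 ^ (i+1) = 2 ^ i + 2 ^ i := by ring
      have hmlow : 2 ^ i ≤ m := by omega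
      have hm0 : m ≠ 0 := by
        have := Nat.one_le_two_pow (n := i); omega
      have hmn' : m < n := hmn
      have him : i ≤ L := by
        have h1' : i ≤ Nat.log 2 m := (Nat.le_log_iff_pow_le one_lt_two hm0).mpr hmlow
        have h2' : Nat.log 2 m ≤ Nat.log 2 n := Nat.log_mono_right (le_of_lt hmn')
        omega
      simp only [hB, Finset.coe_biUnion, Set.mem_iUnion, Finset.mem_coe,
        Finset.mem_range, Finset.mem_Ico]
      exact ⟨i, by omega, h1, h2⟩
    have h1 : (Xᶜ ∩ Set.Iio n).ncard ≤ ∑ i ∈ Finset.range (L+1), g i := by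
      calc (Xᶜ ∩ Set.Iio n).ncard ≤ (B : Set ℕ).ncard :=
            Set.ncard_le_ncard hsub (Finset.finite_toSet _)
        _ = B.card := Set.ncard_coe_finset _
        _ ≤ ∑ i ∈ Finset.range (L+1), (Finset.Ico (2^(i+1) - g i) (2^(i+1))).card :=
            Finset.card_biUnion_le
        _ = ∑ i ∈ Finset.range (L+1), g i := by
            apply Finset.sum_congr rfl
            intro i _
            rw [Nat.card_Ico]
            have hgi := hgle i
            have hpowi : 2 ^ (i+1) = 2 ^ i + 2 ^ i := by ring
            omega
    have h2 : ∑ i ∈ Finset.range (L+1), g i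
        ≤ C + ∑ i ∈ Finset.range (L+1), 2^(i-e) := by
      calc ∑ i ∈ Finset.range (L+1), g i
          ≤ ∑ i ∈ Finset.range (L+1), ((if i ∈ S then g i else 0) + 2^(i-e)) := by
            apply Finset.sum_le_sum
            intro i _
            by_cases h : i ∈ S
            · simp [h]
            · simp only [if_neg h, zero_add]
              have hni : ¬ 2^(i-e) ≤ g i := by
                intro hcon
                exact h ((hfin e).mem_toFinset.mpr hcon)
              omega
        _ = (∑ i ∈ Finset.range (L+1), if i ∈ S then g i else 0)
              + ∑ i ∈ Finset.range (L+1), 2^(i-e) := Finset.sum_add_distrib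
        _ ≤ C + ∑ i ∈ Finset.range (L+1), 2^(i-e) := by
            apply Nat.add_le_add_right
            rw [Finset.sum_ite_mem]
            exact Finset.sum_le_sum_of_subset (Finset.inter_subset_right)
    have h3 : 2^e * ∑ i ∈ Finset.range (L+1), 2^(i-e) ≤ 2^e * e + 2^(L+1) := by
      rw [Finset.mul_sum]
      exact aux_sum e (L+1)
    have h4 : 2^(L+1) ≤ 2 * n := by
      have hlog : 2 ^ L ≤ n := by
        rw [hL]; exact Nat.pow_log_le_self 2 (by omega : n ≠ 0)
      have : 2^(L+1) = 2 * 2^L := by ring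
      omega
    calc 2^e * (Xᶜ ∩ Set.Iio n).ncard
        ≤ 2^e * (C + ∑ i ∈ Finset.range (L+1), 2^(i-e)) :=
          Nat.mul_le_mul_left _ (le_trans h1 h2)
      _ = 2^e * C + 2^e * ∑ i ∈ Finset.range (L+1), 2^(i-e) := Nat.mul_add _ _ _
      _ ≤ 2^e * C + (2^e * e + 2^(L+1)) := Nat.add_le_add_left h3 _
      _ ≤ 2^e * (C + e) + 2 * n := by
          rw [Nat.mul_add]
          linarith [h4]
  -- now the epsilon argument
  have htend := tendsto_const_div_atTop_nhds_zero_nat ((C:ℝ) + e)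
  have hev : ∀ᶠ n : ℕ in atTop, ((C:ℝ)+e)/n < ε/2 :=
    htend.eventually (gt_mem_nhds (by linarith))
  rw [eventually_atTop] at hev
  obtain ⟨N, hN⟩ := hev
  refine ⟨max N 1, fun n hn => ?_⟩
  have hn1 : 1 ≤ n := le_trans (le_max_right _ _) hn
  have hnN : N ≤ n := le_trans (le_max_left _ _) hn
  have hc := key n hn1
  set c := (Xᶜ ∩ Set.Iio n).ncard with hcdef
  have hnpos : (0:ℝ) < n := by
    have : (1:ℝ) ≤ n := by exact_mod_cast hn1
    linarith
  have hne : (n:ℝ) ≠ 0 := ne_of_gt hnpos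
  have hsplit : (X ∩ Set.Iio n).ncard + c = n := by
    rw [hcdef]
    have hdisj : Disjoint (X ∩ Set.Iio n) (Xᶜ ∩ Set.Iio n) :=
      (disjoint_compl_right (a := X)).mono inf_le_left inf_le_left
    have hun : (X ∩ Set.Iio n) ∪ (Xᶜ ∩ Set.Iio n) = Set.Iio n := by
      rw [← Set.union_inter_distrib_right, Set.union_compl_self, Set.univ_inter]
    have hfin1 : (X ∩ Set.Iio n).Finite := (Set.finite_Iio n).inter_of_right _
    have hfin2 : (Xᶜ ∩ Set.Iio n).Finite := (Set.finite_Iio n).inter_of_right _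
    rw [← Set.ncard_union_eq hdisj hfin1 hfin2, hun, ← Finset.coe_Iio,
      Set.ncard_coe_finset, Nat.card_Iio]
  -- cast the key bound
  have hcr : (2:ℝ)^e * c ≤ 2^e * ((C:ℝ)+e) + 2*n := by exact_mod_cast hc
  have hdiv : (c:ℝ)/n ≤ ((C:ℝ)+e)/n + 2/2^e := by
    calc (c:ℝ)/n = (2^e * c)/(2^e * n) := by
          rw [mul_div_mul_left _ _ (ne_of_gt h2epos)]
      _ ≤ (2^e*((C:ℝ)+e) + 2*n)/(2^e * n) := by
          gcongr
      _ = ((C:ℝ)+e)/n + 2/2^e := by field_simp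
  have hpd : partialDensity X n - 1 = -((c:ℝ)/n) := by
    have hcast : ((X ∩ Set.Iio n).ncard : ℝ) = (n:ℝ) - c := by
      have : ((X ∩ Set.Iio n).ncard : ℝ) + c = n := by exact_mod_cast hsplit
      linarith
    rw [partialDensity, hcast]
    field_simp
    ring
  rw [Real.dist_eq, hpd, abs_neg, abs_of_nonneg (by positivity)]
  have := hN n hnN
  linarith
end

section
/- Define R̃(X) ⊆ ℕ by: for n ≥ 2, n ∈ R̃(X) iff m ∈ X where 2^m is the largest power of 2 less than or equal to n. Then for any density-1 set D ⊆ ℕ, the restriction of R̃(X) to D determines all but finitely many bits of X: for all sufficiently large m, there exists n ∈ D with 2^m ≤ n < 2^(m+1), and for any such n, m ∈ X ↔ n ∈ R̃(X). -/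
open Filter

/-- `R̃(X) = {n ≥ 2 : ⌊log₂ n⌋ ∈ X}`, coding the bits of `X` into finite blocks. -/
def RTildeSet (X : Set ℕ) : Set ℕ := {n : ℕ | 2 ≤ n ∧ Nat.log 2 n ∈ X}

/-- The restriction of `R̃(X)` to a density-1 set `D` determines all but finitely many
bits of `X`: for all sufficiently large `m`, `D` meets the dyadic block `[2^m, 2^(m+1))`,
and the bit of `R̃(X)` at any point of `D` in that block equals the bit of `X` at `m`. -/
theorem RTildeSet_determines_cofinitely (X : Set ℕ) (D : Set ℕ) (hD : Density1 D) :
    ∃ M : ℕ, ∀ m : ℕ, M ≤ m →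
      (∃ n ∈ D, 2 ^ m ≤ n ∧ n < 2 ^ (m + 1)) ∧
      (∀ n ∈ D, 2 ^ m ≤ n → n < 2 ^ (m + 1) → (m ∈ X ↔ n ∈ RTildeSet X)) := by
  have h := Metric.tendsto_atTop.mp hD (1/2) (by norm_num)
  obtain ⟨N, hN⟩ := h
  refine ⟨max N 1, fun m hm => ?_⟩
  have hm1 : 1 ≤ m := le_trans (le_max_right N 1) hm
  have hNm : N ≤ m := le_trans (le_max_left N 1) hm
  constructor
  · by_contra hempty
    push_neg at hempty
    have hsub : D ∩ Set.Iio (2 ^ (m + 1)) ⊆ Set.Iio (2 ^ m) := by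
      rintro n ⟨hnD, hn⟩
      simp only [Set.mem_Iio] at *
      by_contra hge
      push_neg at hge
      exact absurd hn (not_lt.mpr (hempty n hnD hge))
    have hcard : (D ∩ Set.Iio (2 ^ (m + 1))).ncard ≤ 2 ^ m := by
      calc (D ∩ Set.Iio (2 ^ (m + 1))).ncard ≤ (Set.Iio (2 ^ m) : Set ℕ).ncard :=
            Set.ncard_le_ncard hsub (Set.finite_Iio _)
        _ = 2 ^ m := by rw [← Finset.coe_range, Set.ncard_coe_finset, Finset.card_range]
    have hle : partialDensity D (2 ^ (m + 1)) ≤ 1/2 := by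
      unfold partialDensity
      rw [div_le_iff₀ (by positivity)]
      calc ((D ∩ Set.Iio (2 ^ (m + 1))).ncard : ℝ) ≤ (2 ^ m : ℕ) := by exact_mod_cast hcard
        _ = 1/2 * (2 ^ (m+1) : ℕ) := by push_cast [pow_succ]; ring
    have hNle : N ≤ 2 ^ (m + 1) := le_trans hNm (le_trans (Nat.le_succ m)
      (Nat.lt_two_pow_self (n := m+1)).le)
    have := hN (2 ^ (m + 1)) hNle
    rw [Real.dist_eq, abs_lt] at this
    linarith [this.1]
  · intro n hnD hlo hhi
    have hlog : Nat.log 2 n = m := by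
      apply Nat.log_eq_of_pow_le_of_lt_pow hlo hhi
    have hn2 : 2 ≤ n := le_trans (by
      calc (2:ℕ) = 2 ^ 1 := (pow_one 2).symm
        _ ≤ 2 ^ m := Nat.pow_le_pow_right (by norm_num) hm1) hlo
    constructor
    · intro hmX; exact ⟨hn2, hlog ▸ hmX⟩
    · intro ⟨_, hx⟩; exact hlog ▸ hx
end

section
/- There exists a computable reflexive binary relation R on ℕ such that every reflexive binary relation on a countable set embeds into R (i.e., R is universal for countable reflexive binary relations). -/
namespace UnivRel

def Rb : ℕ → ℕ → Bool := fun x y =>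
  if x = y then true
  else if y < x then decide ((x / 4 ^ y) % 2 = 1)
  else decide ((y / 4 ^ x / 2) % 2 = 1)

def R (a b : ℕ) : Prop := Rb a b = true

lemma R_refl (a : ℕ) : R a a := by simp [R, Rb]

lemma R_gt {x y : ℕ} (h : y < x) : R x y ↔ (x / 4 ^ y) % 2 = 1 := by
  simp [R, Rb, h, Nat.ne_of_gt h]

lemma R_lt {x y : ℕ} (h : x < y) : R x y ↔ (y / 4 ^ x / 2) % 2 = 1 := by
  simp [R, Rb, Nat.ne_of_lt h, Nat.not_lt.2 (le_of_lt h)]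

lemma digit_ofDigits : ∀ (D : List ℕ), (∀ a ∈ D, a < 4) → ∀ i,
    Nat.ofDigits 4 D / 4 ^ i % 4 = D.getD i 0 := by
  intro D
  induction D with
  | nil => intro _ i; simp [Nat.ofDigits]
  | cons d t ih =>
    intro h i
    have hd : d < 4 := h d (List.mem_cons_self)
    have hco : Nat.ofDigits 4 (d :: t) = d + 4 * Nat.ofDigits 4 t := by
      rw [Nat.ofDigits_cons]
    cases i with
    | zero => simp only [pow_zero, Nat.div_one, hco, List.getD_cons_zero]; omega
    | succ i =>
      have hdiv : Nat.ofDigits 4 (d :: t) / 4 = Nat.ofDigits 4 t := by rw [hco]; omega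
      rw [pow_succ', ← Nat.div_div_eq_div_mul, hdiv, List.getD_cons_succ]
      exact ih (fun a ha => h a (List.mem_cons_of_mem _ ha)) i

lemma key (R'' : ℕ → ℕ → Prop) (n : ℕ) (L : List ℕ) :
    ∃ x : ℕ, L.Pairwise (· < ·) →
      ∀ m (hm : m < L.length),
        L.get ⟨m, hm⟩ < x ∧ (R x (L.get ⟨m, hm⟩) ↔ R'' n m) ∧
          (R (L.get ⟨m, hm⟩) x ↔ R'' m n) := by
  classical
  set K := L.sum + 1 with hK
  set w : ℕ → ℕ := fun p =>
    if p = K then 1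
    else if p ∈ L then
      (if R'' n (L.idxOf p) then 1 else 0) + 2 * (if R'' (L.idxOf p) n then 1 else 0)
    else 0 with hw
  set D := (List.range (K + 1)).map w with hD
  set x := Nat.ofDigits 4 D with hx
  have hlt4 : ∀ a ∈ D, a < 4 := by
    intro a ha
    simp only [hD, List.mem_map] at ha
    obtain ⟨p, _, rfl⟩ := ha
    simp only [hw]; split_ifs <;> omega
  have hDlen : D.length = K + 1 := by simp [hD]
  have hget : ∀ p, p < K + 1 → x / 4 ^ p % 4 = w p := by
    intro p hp
    rw [digit_ofDigits D hlt4 p, List.getD_eq_getElem _ _ (by omega)]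
    simp [hD]
  have hxK : x / 4 ^ K % 4 = 1 := by
    rw [hget K (by omega)]; simp [hw]
  have hKx : K < x := by
    have h1 : 1 ≤ x / 4 ^ K := by
      by_contra h
      interval_cases h' : x / 4 ^ K
      · simp [h'] at hxK
    have h2 : 4 ^ K ≤ x := (Nat.one_le_div_iff (Nat.pow_pos (by norm_num))).mp h1
    calc K < 4 ^ K := Nat.lt_pow_self (by norm_num)
    _ ≤ x := h2
  refine ⟨x, fun hpw m hm => ?_⟩
  set v := L.get ⟨m, hm⟩ with hv
  have hvL : v ∈ L := by rw [hv, List.get_eq_getElem]; exact List.getElem_mem _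
  have hvK : v < K := by
    have := List.single_le_sum (fun a _ => Nat.zero_le a) v hvL
    omega
  have hvx : v < x := lt_trans hvK hKx
  have hnd : L.Nodup := hpw.imp (fun h => Nat.ne_of_lt h)
  have hidx : L.idxOf v = m := by
    have := List.Nodup.idxOf_getElem hnd m (by exact hm)
    simpa [hv, List.get_eq_getElem] using this
  have hdv : x / 4 ^ v % 4 =
      (if R'' n m then 1 else 0) + 2 * (if R'' m n then 1 else 0) := by
    rw [hget v (by omega)]
    simp only [hw]
    rw [if_neg (by omega), if_pos hvL, hidx]
  refine ⟨hvx, ?_, ?_⟩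
  · rw [R_gt hvx]
    by_cases h1 : R'' n m <;> by_cases h2 : R'' m n <;>
      simp only [h1, h2, if_true, if_false, iff_true, iff_false] at hdv ⊢ <;> omega
  · rw [R_lt hvx]
    by_cases h1 : R'' n m <;> by_cases h2 : R'' m n <;>
      simp only [h1, h2, if_true, if_false, iff_true, iff_false] at hdv ⊢ <;> omega

noncomputable def next (R'' : ℕ → ℕ → Prop) (n : ℕ) (L : List ℕ) : ℕ :=
  Classical.choose (key R'' n L)

noncomputable def seq (R'' : ℕ → ℕ → Prop) : ℕ → List ℕ
  | 0 => []
  | n + 1 => seq R'' n ++ [next R'' n (seq R'' n)]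

variable {R'' : ℕ → ℕ → Prop}

lemma seq_length (n : ℕ) : (seq R'' n).length = n := by
  induction n with
  | zero => rfl
  | succ n ih => simp [seq, ih]

lemma next_spec (n : ℕ) (L : List ℕ) (hpw : L.Pairwise (· < ·)) :
    ∀ m (hm : m < L.length),
      L.get ⟨m, hm⟩ < next R'' n L ∧ (R (next R'' n L) (L.get ⟨m, hm⟩) ↔ R'' n m) ∧
        (R (L.get ⟨m, hm⟩) (next R'' n L) ↔ R'' m n) :=
  Classical.choose_spec (key R'' n L) hpw

lemma seq_pairwise (n : ℕ) : (seq R'' n).Pairwise (· < ·) := by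
  induction n with
  | zero => exact List.Pairwise.nil
  | succ n ih =>
    rw [seq, List.pairwise_append]
    refine ⟨ih, List.pairwise_singleton _ _, ?_⟩
    intro a ha b hb
    simp only [List.mem_singleton] at hb
    subst hb
    obtain ⟨i, hi⟩ := List.get_of_mem ha
    obtain ⟨m, hm⟩ := i
    rw [← hi]
    exact (next_spec n (seq R'' n) ih m hm).1

noncomputable def f (R'' : ℕ → ℕ → Prop) (n : ℕ) : ℕ := (seq R'' (n + 1)).getD n 0

lemma seq_getD {k n : ℕ} (h : n < k) : (seq R'' k).getD n 0 = f R'' n := by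
  induction k with
  | zero => omega
  | succ k ih =>
    rcases Nat.lt_or_ge n k with h' | h'
    · rw [← ih h', seq]
      rw [List.getD_eq_getElem _ _ (by simp [seq_length]; omega),
        List.getD_eq_getElem _ _ (by simp [seq_length]; omega)]
      rw [List.getElem_append_left (by simp [seq_length]; omega)]
    · have : n = k := by omega
      subst this
      rfl

lemma f_eq_next (n : ℕ) : f R'' n = next R'' n (seq R'' n) := by
  show (seq R'' (n + 1)).getD n 0 = _
  rw [seq, List.getD_eq_getElem _ _ (by simp [seq_length])]
  rw [List.getElem_append_right (by simp [seq_length])]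
  simp [seq_length]

lemma f_spec {m n : ℕ} (h : m < n) :
    f R'' m < f R'' n ∧ (R (f R'' n) (f R'' m) ↔ R'' n m) ∧
      (R (f R'' m) (f R'' n) ↔ R'' m n) := by
  have hm : m < (seq R'' n).length := by rw [seq_length]; omega
  have hg : (seq R'' n).get ⟨m, hm⟩ = f R'' m := by
    rw [← seq_getD (show m < n from h), List.getD_eq_getElem _ _ hm, List.get_eq_getElem]
  have := next_spec (R'' := R'') n (seq R'' n) (seq_pairwise n) m hm
  rw [hg, ← f_eq_next] at this
  exact this

lemma embed_nat (R'' : ℕ → ℕ → Prop) (hrefl : ∀ a, R'' a a) :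
    ∃ g : ℕ → ℕ, Function.Injective g ∧ ∀ a b, R'' a b ↔ R (g a) (g b) := by
  refine ⟨f R'', ?_, ?_⟩
  · have hmono : StrictMono (f R'') := fun a b hab => (f_spec hab).1
    exact hmono.injective
  · intro a b
    rcases lt_trichotomy a b with h | h | h
    · exact ((f_spec h).2.2).symm
    · subst h
      simp [hrefl a, R_refl (f R'' a)]
    · exact ((f_spec h).2.1).symm


lemma primrec_pow : Primrec₂ (· ^ · : ℕ → ℕ → ℕ) :=
  Primrec₂.unpaired'.mp Nat.Primrec.pow

lemma computable_R : ComputablePred (fun p : ℕ × ℕ => R p.1 p.2) := by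
  rw [ComputablePred.computable_iff]
  refine ⟨fun p => Rb p.1 p.2, ?_, rfl⟩
  have h1 : Primrec (fun p : ℕ × ℕ => Rb p.1 p.2) := by
    unfold Rb
    refine Primrec.ite (Primrec.eq.comp .fst .snd) (.const true) ?_
    refine Primrec.ite (Primrec.nat_lt.comp .snd .fst) ?_ ?_
    · exact (PrimrecRel.comp Primrec.eq
        (Primrec.nat_mod.comp
          (Primrec.nat_div.comp .fst (primrec_pow.comp (.const 4) .snd))
          (.const 2)) (.const 1)).decide
    · exact (PrimrecRel.comp Primrec.eq
        (Primrec.nat_mod.comp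
          (Primrec.nat_div.comp
            (Primrec.nat_div.comp .snd (primrec_pow.comp (.const 4) .fst))
            (.const 2))
          (.const 2)) (.const 1)).decide
  exact h1.to_comp

end UnivRel

/-- There is a computable reflexive binary relation on ℕ which is universal for countable
reflexive binary relations: every reflexive binary relation on a countable type embeds
into it. -/
theorem exists_universal_computable_reflexive_relation :
    ∃ R : ℕ → ℕ → Prop,
      ComputablePred (fun p : ℕ × ℕ => R p.1 p.2) ∧
      (∀ a, R a a) ∧
      ∀ (α : Type) [Countable α] (R' : α → α → Prop), (∀ a, R' a a) →
        ∃ f : α → ℕ, Function.Injective f ∧ ∀ a b, R' a b ↔ R (f a) (f b) := by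
  refine ⟨UnivRel.R, UnivRel.computable_R, UnivRel.R_refl, ?_⟩
  intro α _ R' hrefl
  obtain ⟨e, he⟩ := (countable_iff_exists_injective α).mp ‹Countable α›
  set R'' : ℕ → ℕ → Prop := fun x y => x = y ∨ ∃ a b, e a = x ∧ e b = y ∧ R' a b with hR''
  obtain ⟨g, hginj, hg⟩ := UnivRel.embed_nat R'' (fun a => Or.inl rfl)
  refine ⟨g ∘ e, hginj.comp he, ?_⟩
  intro a b
  rw [Function.comp_apply, Function.comp_apply, ← hg]
  constructor
  · intro h
    exact Or.inr ⟨a, b, rfl, rfl, h⟩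
  · rintro (h | ⟨a', b', ha', hb', h⟩)
    · rw [he h]; exact hrefl b
    · rwa [he ha', he hb'] at h
end

section
/- Let A, X ⊆ ℕ with X density-1. Then X has a density-1 subset that is computably enumerable relative to A if and only if there is an A-computable partial function φ with density-1 domain such that φ(n) = 1 implies n ∈ X, φ(n) = 0 implies n ∉ X (i.e., A generically computes X). -/
open Filter

/-- Partial recursive functions relative to an oracle `O : ℕ →. ℕ`
(relativization of `Nat.Partrec`). -/
inductive RecIn (O : ℕ →. ℕ) : (ℕ →. ℕ) → Prop
  | zero : RecIn O (pure 0)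
  | succ : RecIn O ↑(Nat.succ)
  | left : RecIn O ↑fun n : ℕ => n.unpair.1
  | right : RecIn O ↑fun n : ℕ => n.unpair.2
  | oracle : RecIn O O
  | pair {f g} : RecIn O f → RecIn O g → RecIn O fun n => Nat.pair <$> f n <*> g n
  | comp {f g} : RecIn O f → RecIn O g → RecIn O fun n => g n >>= f
  | prec {f g} : RecIn O f → RecIn O g → RecIn O (Nat.unpaired fun a n =>
      n.rec (f a) fun y IH => do let i ← IH; g (Nat.pair a (Nat.pair y i)))
  | rfind {f} : RecIn O f → RecIn O fun a =>
      Nat.rfind fun n => (fun m => m = 0) <$> f (Nat.pair a n)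

open Classical in
/-- The characteristic function of a set of naturals, as a (total) partial function. -/
noncomputable def chi (A : Set ℕ) : ℕ →. ℕ :=
  fun n => Part.some (if n ∈ A then 1 else 0)

/-- `A` Turing-computes `B`. -/
def TuringComputes (A B : Set ℕ) : Prop := RecIn (chi A) (chi B)

/-- `A` generically computes `C`: some `{0,1}`-valued partial function, partial recursive
in `A`, has density-1 domain and is correct about membership in `C` wherever defined. -/
def GenericallyComputes (A C : Set ℕ) : Prop :=
  ∃ φ : ℕ →. ℕ, RecIn (chi A) φ ∧
    Density1 {n | (φ n).Dom} ∧
    (∀ n v, v ∈ φ n → v = 0 ∨ v = 1) ∧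
    (∀ n, 1 ∈ φ n → n ∈ C) ∧ (∀ n, 0 ∈ φ n → n ∉ C)

/-- `C` is generically computable (no oracle). -/
def GenericallyComputable (C : Set ℕ) : Prop :=
  ∃ φ : ℕ →. ℕ, Nat.Partrec φ ∧
    Density1 {n | (φ n).Dom} ∧
    (∀ n v, v ∈ φ n → v = 0 ∨ v = 1) ∧
    (∀ n, 1 ∈ φ n → n ∈ C) ∧ (∀ n, 0 ∈ φ n → n ∉ C)

/-- `Y` is computably enumerable relative to `A`: it is the domain of a partial
function recursive in `A`. -/
def CEIn (A Y : Set ℕ) : Prop := ∃ φ : ℕ →. ℕ, RecIn (chi A) φ ∧ Y = {n | (φ n).Dom}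

/- ### Auxiliary lemmas -/

lemma aux_ncard_Iio (n : ℕ) : (Set.Iio n).ncard = n := by
  rw [show (Set.Iio n) = ↑(Finset.Iio n) by simp, Set.ncard_coe_finset, Nat.card_Iio]

lemma aux_pd_le_one (A : Set ℕ) (n : ℕ) : partialDensity A n ≤ 1 := by
  unfold partialDensity
  rcases Nat.eq_zero_or_pos n with h | h
  · simp [h]
  · rw [div_le_one (by positivity)]
    have : (A ∩ Set.Iio n).ncard ≤ (Set.Iio n).ncard :=
      Set.ncard_le_ncard Set.inter_subset_right (Set.finite_Iio n)
    rw [aux_ncard_Iio] at this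
    exact_mod_cast this

lemma aux_pd_mono {A B : Set ℕ} (h : A ⊆ B) (n : ℕ) :
    partialDensity A n ≤ partialDensity B n := by
  unfold partialDensity
  have hc : (A ∩ Set.Iio n).ncard ≤ (B ∩ Set.Iio n).ncard :=
    Set.ncard_le_ncard (Set.inter_subset_inter_left _ h)
      ((Set.finite_Iio n).subset Set.inter_subset_right)
  have : ((A ∩ Set.Iio n).ncard : ℝ) ≤ (B ∩ Set.Iio n).ncard := by exact_mod_cast hc
  rcases Nat.eq_zero_or_pos n with h0 | h0
  · simp [h0]
  · gcongr

lemma aux_density1_of_subset {A B : Set ℕ} (h : A ⊆ B) (hA : Density1 A) : Density1 B :=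
  tendsto_of_tendsto_of_tendsto_of_le_of_le hA tendsto_const_nhds
    (fun n => aux_pd_mono h n) (fun n => aux_pd_le_one B n)

lemma aux_density1_inter {A B : Set ℕ} (hA : Density1 A) (hB : Density1 B) :
    Density1 (A ∩ B) := by
  have hlow : ∀ n, partialDensity A n + partialDensity B n - 1 ≤ partialDensity (A ∩ B) n := by
    intro n
    rcases Nat.eq_zero_or_pos n with h | h
    · simp [partialDensity, h]
    · have hfin : ∀ S : Set ℕ, (S ∩ Set.Iio n).Finite := fun S =>
        (Set.finite_Iio n).subset Set.inter_subset_right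
      have key : ((A ∩ Set.Iio n) ∪ (B ∩ Set.Iio n)).ncard
            + ((A ∩ Set.Iio n) ∩ (B ∩ Set.Iio n)).ncard
          = (A ∩ Set.Iio n).ncard + (B ∩ Set.Iio n).ncard :=
        Set.ncard_union_add_ncard_inter _ _ (hfin A) (hfin B)
      have h1 : ((A ∩ Set.Iio n) ∪ (B ∩ Set.Iio n)).ncard ≤ n := by
        have := Set.ncard_le_ncard (show (A ∩ Set.Iio n) ∪ (B ∩ Set.Iio n) ⊆ Set.Iio n by
          rintro x (⟨_, hx⟩ | ⟨_, hx⟩) <;> exact hx) (Set.finite_Iio n)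
        rwa [aux_ncard_Iio] at this
      have h2 : (A ∩ Set.Iio n) ∩ (B ∩ Set.Iio n) = (A ∩ B) ∩ Set.Iio n := by
        ext x; simp; tauto
      rw [h2] at key
      have hnat : (A ∩ Set.Iio n).ncard + (B ∩ Set.Iio n).ncard
          ≤ n + ((A ∩ B) ∩ Set.Iio n).ncard := by omega
      have h3 : ((A ∩ Set.Iio n).ncard + (B ∩ Set.Iio n).ncard : ℝ)
          ≤ ((A ∩ B ∩ Set.Iio n).ncard : ℝ) + n := by
        exact_mod_cast by
          linarith [(by exact_mod_cast hnat :
            ((A ∩ Set.Iio n).ncard + (B ∩ Set.Iio n).ncard : ℝ)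
              ≤ (n : ℝ) + ((A ∩ B ∩ Set.Iio n).ncard : ℝ))]
      unfold partialDensity
      rw [← add_div, sub_le_iff_le_add, div_add' _ _ _ (by positivity),
        div_le_div_iff_of_pos_right (by positivity)]
      linarith
  have hl : Tendsto (fun n => partialDensity A n + partialDensity B n - 1) atTop (nhds 1) := by
    have := (hA.add hB).sub_const 1
    simpa using this
  exact tendsto_of_tendsto_of_tendsto_of_le_of_le hl tendsto_const_nhds hlow
    (fun n => aux_pd_le_one _ n)

theorem RecIn.of_partrec {O : ℕ →. ℕ} {f : ℕ →. ℕ} (h : Nat.Partrec f) : RecIn O f := by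
  induction h with
  | zero => exact .zero
  | succ => exact .succ
  | left => exact .left
  | right => exact .right
  | pair _ _ ih1 ih2 => exact .pair ih1 ih2
  | comp _ _ ih1 ih2 => exact .comp ih1 ih2
  | prec _ _ ih1 ih2 => exact .prec ih1 ih2
  | rfind _ ih => exact .rfind ih

theorem aux_flip_partrec : Nat.Partrec (↑(fun v => 1 - v : ℕ → ℕ) : ℕ →. ℕ) :=
  Nat.Partrec.of_primrec (Primrec.nat_iff.1 (Primrec.nat_sub.comp (Primrec.const 1) Primrec.id))


/-- For density-1 `X`: `X` has a density-1 subset that is c.e. in `A` iff `A`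
generically computes `X`. -/
theorem density1_ce_subset_iff_generically_computes (A X : Set ℕ) (hX : Density1 X) :
    (∃ Y : Set ℕ, Y ⊆ X ∧ Density1 Y ∧ CEIn A Y) ↔ GenericallyComputes A X := by
  constructor
  · rintro ⟨Y, hYX, hY1, ψ, hψrec, hYdom⟩
    set φ' : ℕ →. ℕ := fun n => ψ n >>= fun m => (pure 0 : ℕ →. ℕ) m >>= (↑Nat.succ : ℕ →. ℕ)
      with hφ'
    have hrec' : RecIn (chi A) φ' := RecIn.comp (RecIn.comp RecIn.succ RecIn.zero) hψrec
    have hchar : ∀ n v, v ∈ φ' n ↔ (ψ n).Dom ∧ v = 1 := by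
      intro n v
      rw [hφ']
      simp [Pure.pure, PFun.pure, Part.mem_bind_iff, Part.mem_some_iff, Part.dom_iff_mem]
      exact fun x _ => Iff.trans (iff_of_eq (congrArg (v ∈ ·) (Part.bind_some 0 (↑Nat.succ : ℕ →. ℕ)))) Part.mem_some_iff
    refine ⟨φ', hrec', ?_, ?_, ?_, ?_⟩
    · have : {n | (φ' n).Dom} = Y := by
        ext n
        simp only [Set.mem_setOf_eq, Part.dom_iff_mem, hYdom]
        constructor
        · rintro ⟨v, hv⟩
          exact Part.dom_iff_mem.1 ((hchar n v).1 hv).1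
        · intro h
          exact ⟨1, (hchar n 1).2 ⟨Part.dom_iff_mem.2 h, rfl⟩⟩
      rw [this]; exact hY1
    · intro n v hv
      exact Or.inr ((hchar n v).1 hv).2
    · intro n h1
      exact hYX (by rw [hYdom]; exact ((hchar n 1).1 h1).1)
    · intro n h0
      exact absurd ((hchar n 0).1 h0).2 (by omega)
  · rintro ⟨φ, hrec, hdom, hval, h1, h0⟩
    set f : ℕ →. ℕ := fun n =>
        ((↑(fun n : ℕ => n.unpair.1) : ℕ →. ℕ) n >>= φ) >>= (↑(fun v => 1 - v : ℕ → ℕ) : ℕ →. ℕ) with hf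
    have hfrec : RecIn (chi A) f :=
      RecIn.comp (RecIn.of_partrec aux_flip_partrec) (RecIn.comp hrec RecIn.left)
    set ψ : ℕ →. ℕ := fun a => Nat.rfind fun n => (fun m => m = 0) <$> f (Nat.pair a n) with hψ
    have hψrec : RecIn (chi A) ψ := RecIn.rfind hfrec
    have hfa : ∀ a n, f (Nat.pair a n) = φ a >>= (↑(fun v => 1 - v : ℕ → ℕ) : ℕ →. ℕ) := by
      intro a n
      simp [hf, Nat.unpair_pair]
      exact congrArg (· >>= _) (Part.bind_some a φ)
    have hdomiff : ∀ a, (ψ a).Dom ↔ 1 ∈ φ a := by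
      intro a
      constructor
      · intro h
        obtain ⟨m, hm⟩ := Part.dom_iff_mem.1 h
        have := Nat.rfind_spec hm
        rw [hfa] at this
        simp [Part.mem_map_iff, Part.mem_bind_iff] at this
        obtain ⟨v, hv, hv0⟩ : ∃ v ∈ φ a, 0 = 1 - v := by
          obtain ⟨v, hv, hv0⟩ := Part.mem_bind_iff.1 this; exact ⟨v, hv, Part.mem_some_iff.1 hv0⟩
        rcases hval a v hv with rfl | rfl
        · omega
        · exact hv
      · intro h
        rw [hψ]
        refine Nat.rfind_dom.2 ⟨0, ?_, fun {m} hm => by omega⟩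
        rw [hfa]
        simp [Part.mem_map_iff, Part.mem_bind_iff]
        exact Part.mem_bind_iff.2 ⟨1, h, Part.mem_some_iff.2 rfl⟩
    refine ⟨{n | (ψ n).Dom}, ?_, ?_, ψ, hψrec, rfl⟩
    · intro a ha
      exact h1 a ((hdomiff a).1 ha)
    · refine aux_density1_of_subset ?_ (aux_density1_inter hdom hX)
      rintro a ⟨hda, haX⟩
      obtain ⟨v, hv⟩ := Part.dom_iff_mem.1 hda
      rcases hval a v hv with rfl | rfl
      · exact absurd haX (h0 a hv)
      · exact (hdomiff a).2 hv
end

section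
/- There exists a sequence ⟨X_i⟩ of subsets of ℕ such that for each i, X_i is not Turing-computable from the join of all X_j with j ≠ i. -/
open Filter

/-- The join of the family `{X j : j ≠ i}` under the pairing function. -/
def familyJoinExcept (X : ℕ → Set ℕ) (i : ℕ) : Set ℕ :=
  {p : ℕ | p.unpair.2 ≠ i ∧ p.unpair.1 ∈ X p.unpair.2}

/-! ### Auxiliary development -/

/-- Codes for oracle-partial-recursive functions. -/
inductive OCode : Type
  | zero | succ | left | right | oracle
  | pair (a b : OCode) | comp (a b : OCode)
  | prec (a b : OCode) | rfind (a : OCode)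

namespace OCode

def eval (O : ℕ →. ℕ) : OCode → ℕ →. ℕ
  | .zero => pure 0
  | .succ => ↑Nat.succ
  | .left => ↑fun n : ℕ => n.unpair.1
  | .right => ↑fun n : ℕ => n.unpair.2
  | .oracle => O
  | .pair a b => fun n => Nat.pair <$> a.eval O n <*> b.eval O n
  | .comp a b => fun n => b.eval O n >>= a.eval O
  | .prec a b => Nat.unpaired fun x n =>
      n.rec (a.eval O x) fun y IH => do let i ← IH; b.eval O (Nat.pair x (Nat.pair y i))
  | .rfind a => fun x =>
      Nat.rfind fun n => (fun m => m = 0) <$> a.eval O (Nat.pair x n)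

def enc : OCode → ℕ
  | zero => 0 | succ => 1 | left => 2 | right => 3 | oracle => 4
  | pair a b => 5 * Nat.pair a.enc b.enc + 5
  | comp a b => 5 * Nat.pair a.enc b.enc + 6
  | prec a b => 5 * Nat.pair a.enc b.enc + 7
  | rfind a => 5 * a.enc + 8

theorem enc_inj : Function.Injective enc := by
  intro a
  induction a with
  | pair a1 a2 ih1 ih2 =>
    intro b h
    rcases b with _ | _ | _ | _ | _ | ⟨b1, b2⟩ | ⟨b1, b2⟩ | ⟨b1, b2⟩ | b1 <;>
      simp only [enc] at h <;> try omega
    have hp : Nat.pair a1.enc a2.enc = Nat.pair b1.enc b2.enc := by omega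
    obtain ⟨h1, h2⟩ := Nat.pair_eq_pair.mp hp
    rw [ih1 h1, ih2 h2]
  | comp a1 a2 ih1 ih2 =>
    intro b h
    rcases b with _ | _ | _ | _ | _ | ⟨b1, b2⟩ | ⟨b1, b2⟩ | ⟨b1, b2⟩ | b1 <;>
      simp only [enc] at h <;> try omega
    have hp : Nat.pair a1.enc a2.enc = Nat.pair b1.enc b2.enc := by omega
    obtain ⟨h1, h2⟩ := Nat.pair_eq_pair.mp hp
    rw [ih1 h1, ih2 h2]
  | prec a1 a2 ih1 ih2 =>
    intro b h
    rcases b with _ | _ | _ | _ | _ | ⟨b1, b2⟩ | ⟨b1, b2⟩ | ⟨b1, b2⟩ | b1 <;>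
      simp only [enc] at h <;> try omega
    have hp : Nat.pair a1.enc a2.enc = Nat.pair b1.enc b2.enc := by omega
    obtain ⟨h1, h2⟩ := Nat.pair_eq_pair.mp hp
    rw [ih1 h1, ih2 h2]
  | rfind a1 ih1 =>
    intro b h
    rcases b with _ | _ | _ | _ | _ | ⟨b1, b2⟩ | ⟨b1, b2⟩ | ⟨b1, b2⟩ | b1 <;>
      simp only [enc] at h <;> try omega
    have hp : a1.enc = b1.enc := by omega
    rw [ih1 hp]
  | zero => intro b h; cases b <;> simp only [enc] at h <;> first | rfl | omega
  | succ => intro b h; cases b <;> simp only [enc] at h <;> first | rfl | omega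
  | left => intro b h; cases b <;> simp only [enc] at h <;> first | rfl | omega
  | right => intro b h; cases b <;> simp only [enc] at h <;> first | rfl | omega
  | oracle => intro b h; cases b <;> simp only [enc] at h <;> first | rfl | omega

instance : Countable OCode := ⟨⟨enc, enc_inj⟩⟩

end OCode

theorem RecIn.exists_code {O f : ℕ →. ℕ} (h : RecIn O f) : ∃ c : OCode, OCode.eval O c = f := by
  induction h with
  | zero => exact ⟨.zero, rfl⟩
  | succ => exact ⟨.succ, rfl⟩
  | left => exact ⟨.left, rfl⟩
  | right => exact ⟨.right, rfl⟩
  | oracle => exact ⟨.oracle, rfl⟩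
  | pair _ _ ihf ihg =>
    obtain ⟨a, ha⟩ := ihf; obtain ⟨b, hb⟩ := ihg
    exact ⟨.pair a b, by simp only [OCode.eval, ha, hb]; rfl⟩
  | comp _ _ ihf ihg =>
    obtain ⟨a, ha⟩ := ihf; obtain ⟨b, hb⟩ := ihg
    exact ⟨.comp a b, by simp only [OCode.eval, ha, hb]; rfl⟩
  | prec _ _ ihf ihg =>
    obtain ⟨a, ha⟩ := ihf; obtain ⟨b, hb⟩ := ihg
    exact ⟨.prec a b, by simp only [OCode.eval, ha, hb]; rfl⟩
  | rfind _ ihf =>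
    obtain ⟨a, ha⟩ := ihf
    exact ⟨.rfind a, by simp only [OCode.eval, ha]; rfl⟩

private theorem seq_elim {f g : ℕ →. ℕ} {n v : ℕ} (h : v ∈ (Nat.pair <$> f n <*> g n)) :
    ∃ a ∈ f n, ∃ b ∈ g n, v = Nat.pair a b := by
  simp only [Seq.seq, Part.mem_bind_iff, Part.mem_map_iff] at h
  obtain ⟨F, hF, b, hb, hv⟩ := h
  obtain ⟨a, ha, rfl⟩ := (Part.mem_map_iff _).mp hF
  exact ⟨a, ha, b, hb, hv.symm⟩

private theorem seq_intro {f g : ℕ →. ℕ} {n a b : ℕ} (ha : a ∈ f n) (hb : b ∈ g n) :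
    Nat.pair a b ∈ (Nat.pair <$> f n <*> g n) := by
  simp only [Seq.seq, Part.mem_bind_iff, Part.mem_map_iff]
  exact ⟨Nat.pair a, (Part.mem_map_iff _).mpr ⟨a, ha, rfl⟩, b, hb, rfl⟩

/-- Finite use: a convergent oracle computation only consults finitely much of the oracle. -/
theorem eval_use {O : ℕ →. ℕ} (c : OCode) :
    ∀ x v, v ∈ OCode.eval O c x →
      ∃ T : Finset ℕ, ∀ O' : ℕ →. ℕ, (∀ q ∈ T, O q = O' q) → v ∈ OCode.eval O' c x := by
  induction c with
  | zero => exact fun x v hv => ⟨∅, fun O' _ => hv⟩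
  | succ => exact fun x v hv => ⟨∅, fun O' _ => hv⟩
  | left => exact fun x v hv => ⟨∅, fun O' _ => hv⟩
  | right => exact fun x v hv => ⟨∅, fun O' _ => hv⟩
  | oracle =>
    intro x v hv
    exact ⟨{x}, fun O' h => by
      have := h x (Finset.mem_singleton_self x)
      simpa only [OCode.eval, ← this] using hv⟩
  | pair a b iha ihb =>
    intro x v hv
    obtain ⟨va, hva, vb, hvb, rfl⟩ := seq_elim hv
    obtain ⟨Ta, hTa⟩ := iha x va hva
    obtain ⟨Tb, hTb⟩ := ihb x vb hvb
    refine ⟨Ta ∪ Tb, fun O' h => ?_⟩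
    exact seq_intro (hTa O' fun q hq => h q (Finset.mem_union_left _ hq))
      (hTb O' fun q hq => h q (Finset.mem_union_right _ hq))
  | comp a b iha ihb =>
    intro x v hv
    simp only [OCode.eval] at hv ⊢
    obtain ⟨w, hw, hvw⟩ := Part.mem_bind_iff.mp hv
    obtain ⟨Tb, hTb⟩ := ihb x w hw
    obtain ⟨Ta, hTa⟩ := iha w v hvw
    refine ⟨Ta ∪ Tb, fun O' h => ?_⟩
    exact Part.mem_bind_iff.mpr ⟨w, hTb O' fun q hq => h q (Finset.mem_union_right _ hq),
      hTa O' fun q hq => h q (Finset.mem_union_left _ hq)⟩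
  | prec a b iha ihb =>
    intro x v hv
    simp only [OCode.eval, Nat.unpaired] at hv ⊢
    -- inner induction on x.unpair.2
    suffices H : ∀ (n xa : ℕ) (v : ℕ),
        v ∈ (n.rec (OCode.eval O a xa)
          (fun y IH => IH >>= fun i => OCode.eval O b (Nat.pair xa (Nat.pair y i))) : Part ℕ) →
        ∃ T : Finset ℕ, ∀ O' : ℕ →. ℕ, (∀ q ∈ T, O q = O' q) →
          v ∈ (n.rec (OCode.eval O' a xa)
            (fun y IH => IH >>= fun i => OCode.eval O' b (Nat.pair xa (Nat.pair y i))) : Part ℕ) by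
      exact H _ _ v hv
    intro n
    induction n with
    | zero => exact fun xa v hv => iha xa v hv
    | succ n ihn =>
      intro xa v hv
      simp only [Part.bind_eq_bind, Part.mem_bind_iff] at hv
      obtain ⟨w, hw, hvw⟩ := hv
      obtain ⟨T1, hT1⟩ := ihn xa w hw
      obtain ⟨T2, hT2⟩ := ihb (Nat.pair xa (Nat.pair n w)) v hvw
      refine ⟨T1 ∪ T2, fun O' h => ?_⟩
      simp only [Part.bind_eq_bind, Part.mem_bind_iff]
      exact ⟨w, hT1 O' fun q hq => h q (Finset.mem_union_left _ hq),
        hT2 O' fun q hq => h q (Finset.mem_union_right _ hq)⟩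
  | rfind a iha =>
    intro x v hv
    simp only [OCode.eval] at hv ⊢
    replace hv := Nat.mem_rfind.mp hv
    obtain ⟨htrue, hfalse⟩ := hv
    have key : ∀ m : ℕ, ∃ T : Finset ℕ, m ≤ v → ∀ O' : ℕ →. ℕ, (∀ q ∈ T, O q = O' q) →
        ((if m < v then false else true) : Bool) ∈
          ((fun m => decide (m = 0)) <$> OCode.eval O' a (Nat.pair x m)) := by
      intro m
      by_cases hm : m ≤ v
      · have hb : ((if m < v then false else true) : Bool) ∈
            ((fun m => decide (m = 0)) <$> OCode.eval O a (Nat.pair x m)) := by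
          rcases lt_or_eq_of_le hm with h | h
          · simpa [h] using hfalse h
          · simpa [h] using htrue
        obtain ⟨w, hw, hwv⟩ := (Part.mem_map_iff _).mp hb
        obtain ⟨T, hT⟩ := iha (Nat.pair x m) w hw
        exact ⟨T, fun _ O' hO' => (Part.mem_map_iff _).mpr ⟨w, hT O' hO', hwv⟩⟩
      · exact ⟨∅, fun h => absurd h hm⟩
    choose T hT using key
    refine ⟨(Finset.range (v + 1)).biUnion T, fun O' h => ?_⟩
    apply Nat.mem_rfind.mpr
    constructor
    · have := hT v le_rfl O' fun q hq =>
        h q (Finset.mem_biUnion.mpr ⟨v, Finset.mem_range.mpr (Nat.lt_succ_self v), hq⟩)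
      simpa using this
    · intro m hm
      have := hT m (le_of_lt hm) O' fun q hq =>
        h q (Finset.mem_biUnion.mpr ⟨m, Finset.mem_range.mpr (Nat.lt_succ_of_lt hm), hq⟩)
      simpa [hm] using this

/-! ### The Cantor space construction -/

/-- The columns of `Y : ℕ → Bool` viewed as a family of sets. -/
def cols (Y : ℕ → Bool) (j : ℕ) : Set ℕ := {n | Y (Nat.pair n j) = true}

theorem mem_join_iff (Y : ℕ → Bool) (i q : ℕ) :
    q ∈ familyJoinExcept (cols Y) i ↔ (q.unpair.2 ≠ i ∧ Y q = true) := by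
  show (q.unpair.2 ≠ i ∧ q.unpair.1 ∈ cols Y q.unpair.2) ↔ _
  unfold cols
  rw [Set.mem_setOf_eq, Nat.pair_unpair]

theorem chi_join_agree {Y Y' : ℕ → Bool} {i : ℕ} {q : ℕ}
    (h : q.unpair.2 = i ∨ Y q = Y' q) :
    chi (familyJoinExcept (cols Y) i) q = chi (familyJoinExcept (cols Y') i) q := by
  have : (q ∈ familyJoinExcept (cols Y) i) ↔ (q ∈ familyJoinExcept (cols Y') i) := by
    rw [mem_join_iff, mem_join_iff]
    rcases h with h | h
    · simp [h]
    · rw [h]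
  classical
  simp only [chi]
  exact congrArg Part.some (if_congr this rfl rfl)

/-- The "bad" set for requirement `(i, c)`. -/
def BadSet (i : ℕ) (c : OCode) : Set (ℕ → Bool) :=
  {Y | chi (cols Y i) = OCode.eval (chi (familyJoinExcept (cols Y) i)) c}

open Classical in
theorem chi_mem_self (A : Set ℕ) (n : ℕ) :
    (if n ∈ A then (1 : ℕ) else 0) ∈ chi A n := by
  exact Part.mem_some _

/-- The forcing step. -/
theorem force (i : ℕ) (c : OCode) (Y : ℕ → Bool) (S : Finset ℕ) :
    ∃ (Y' : ℕ → Bool) (S' : Finset ℕ), (∀ q ∈ S, Y' q = Y q) ∧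
      ∀ Y'' : ℕ → Bool, (∀ q ∈ S', Y'' q = Y' q) → Y'' ∉ BadSet i c := by
  classical
  obtain ⟨m, hm⟩ : ∃ m, Nat.pair m i ∉ S := by
    by_contra hcon
    push_neg at hcon
    have hinj : Function.Injective fun m => Nat.pair m i := fun a b h =>
      (Nat.pair_eq_pair.mp h).1
    have : (Set.univ : Set ℕ).Finite :=
      Set.Finite.of_finite_image (S.finite_toSet.subset (by
        rintro _ ⟨m, -, rfl⟩; exact hcon m)) (hinj.injOn)
    exact Set.infinite_univ this
  set p0 := Nat.pair m i with hp0
  have hp0col : p0.unpair.2 = i := by rw [hp0, Nat.unpair_pair]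
  by_cases hA : ∃ Y₁ : ℕ → Bool, (∀ q ∈ S, Y₁ q = Y q) ∧
      ∃ v, v ∈ OCode.eval (chi (familyJoinExcept (cols Y₁) i)) c m
  · obtain ⟨Y₁, hY₁S, v, hv⟩ := hA
    obtain ⟨T, hT⟩ := eval_use c m v hv
    set Y' : ℕ → Bool := fun q => if q = p0 then decide (v = 0) else Y₁ q with hY'
    refine ⟨Y', S ∪ T ∪ {p0}, ?_, ?_⟩
    · intro q hq
      have : q ≠ p0 := fun h => hm (h ▸ hq)
      simp only [hY', if_neg this]
      exact hY₁S q hq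
    · intro Y'' hY'' hbad
      -- the oracles agree on T
      have hagree : ∀ q ∈ T, chi (familyJoinExcept (cols Y₁) i) q =
          chi (familyJoinExcept (cols Y'') i) q := by
        intro q hq
        apply chi_join_agree
        by_cases hqp : q = p0
        · exact Or.inl (hqp ▸ hp0col)
        · right
          have h1 : Y'' q = Y' q := hY'' q (by simp [Finset.mem_union, hq])
          rw [h1, hY']
          simp [hqp]
      have hv'' : v ∈ OCode.eval (chi (familyJoinExcept (cols Y'') i)) c m :=
        hT _ hagree
      rw [← hbad] at hv''
      -- now v is the chi-value of column i of Y'' at m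
      have hval : v = if m ∈ cols Y'' i then 1 else 0 := by
        have := chi_mem_self (cols Y'' i) m
        exact Part.mem_unique hv'' this
      have hcol : (m ∈ cols Y'' i) ↔ Y'' p0 = true := by
        unfold cols; rw [Set.mem_setOf_eq, ← hp0]
      have hY''p0 : Y'' p0 = decide (v = 0) := by
        have h1 : Y'' p0 = Y' p0 := hY'' p0 (by simp [Finset.mem_union])
        rw [h1, hY']; simp
      by_cases hv0 : v = 0
      · subst hv0
        have hb : Y'' p0 = true := by simp [hY''p0]
        have hmem2 : m ∈ cols Y'' i := hcol.mpr hb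
        rw [if_pos hmem2] at hval
        exact one_ne_zero hval.symm
      · have hfalse : Y'' p0 = false := by simp [hY''p0, hv0]
        have hnm : m ∉ cols Y'' i := fun hmem => by
          rw [hcol.mp hmem] at hfalse
          exact Bool.noConfusion hfalse
        rw [if_neg hnm] at hval
        exact hv0 hval
  · push_neg at hA
    refine ⟨Y, S, fun q _ => rfl, fun Y'' h hbad => ?_⟩
    have hmem : (if m ∈ cols Y'' i then (1:ℕ) else 0) ∈
        OCode.eval (chi (familyJoinExcept (cols Y'') i)) c m := by
      rw [← hbad]; exact chi_mem_self _ _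
    exact hA Y'' h _ hmem

theorem cyl_open (Y : ℕ → Bool) (S : Finset ℕ) :
    IsOpen {Z : ℕ → Bool | ∀ q ∈ S, Z q = Y q} := by
  have : {Z : ℕ → Bool | ∀ q ∈ S, Z q = Y q} = ⋂ q ∈ S, {Z : ℕ → Bool | Z q = Y q} := by
    ext Z; simp
  rw [this]
  refine isOpen_biInter_finset fun q _ => ?_
  have h2 : {Z : ℕ → Bool | Z q = Y q} = (fun Z : ℕ → Bool => Z q) ⁻¹' ({Y q} : Set Bool) :=
    rfl
  rw [h2]
  exact (continuous_apply q).isOpen_preimage _ (isOpen_discrete _)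

theorem dense_good (i : ℕ) (c : OCode) : Dense (interior (BadSet i c)ᶜ) := by
  rw [dense_iff_inter_open]
  intro U hU hne
  obtain ⟨Y, hY⟩ := hne
  obtain ⟨I, u, hu, hsub⟩ := isOpen_pi_iff.mp hU Y hY
  obtain ⟨Y', S', hY'S, hforce⟩ := force i c Y I
  have hY'U : Y' ∈ U := by
    apply hsub
    intro q hq
    rw [hY'S q hq]
    exact (hu q hq).2
  have hY'int : Y' ∈ interior (BadSet i c)ᶜ := by
    apply mem_interior.mpr
    exact ⟨{Z : ℕ → Bool | ∀ q ∈ S', Z q = Y' q}, fun Z hZ => hforce Z hZ,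
      cyl_open Y' S', fun q _ => rfl⟩
  exact ⟨Y', hY'U, hY'int⟩

/-- There is a sequence `⟨X i⟩` of subsets of ℕ such that no `X i` is Turing-computable
from the join of all the other members of the sequence. -/
theorem exists_mutually_noncomputable_family :
    ∃ X : ℕ → Set ℕ, ∀ i, ¬ TuringComputes (familyJoinExcept X i) (X i) := by
  have hdense : Dense (⋂ p : ℕ × OCode, interior (BadSet p.1 p.2)ᶜ) :=
    dense_iInter_of_isOpen (fun p => isOpen_interior) (fun p => dense_good p.1 p.2)
  obtain ⟨Y, hY⟩ := hdense.nonempty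
  refine ⟨cols Y, fun i hcomp => ?_⟩
  obtain ⟨c, hc⟩ := hcomp.exists_code
  have hbad : Y ∈ BadSet i c := hc.symm
  have hgood : Y ∈ interior (BadSet i c)ᶜ := Set.mem_iInter.mp hY (i, c)
  exact interior_subset hgood hbad
end

section
/- With J the asymmetric join of A and B as above, a set C generically computes J if and only if C Turing-computes A. In particular, the restriction of J to any density-1 set determines A, and any set computing A can compute J on the density-1 set L. -/
open Filter

/-- `R(A) = {n ≥ 1 : ν₂(n) ∈ A}`. -/
def RSet (A : Set ℕ) : Set ℕ := {n : ℕ | 1 ≤ n ∧ padicValNat 2 n ∈ A}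

/-- The powers of two. -/
def powTwo : Set ℕ := {n : ℕ | ∃ m : ℕ, n = 2 ^ m}

/-- The asymmetric join of `A` and `B`: it agrees with `R(A)` on the density-1 set of
non-powers of 2, and has `B` coded into the powers of 2. -/
def asymJoin (A B : Set ℕ) : Set ℕ :=
  (RSet A ∩ powTwoᶜ) ∪ {n : ℕ | ∃ m ∈ B, n = 2 ^ m}

/-- The ordinary join `A ⊕ B`. -/
def join (A B : Set ℕ) : Set ℕ := {n : ℕ | ∃ m ∈ A, n = 2 * m} ∪ {n : ℕ | ∃ m ∈ B, n = 2 * m + 1}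

namespace AJP

open Encodable

def listSeg (χ : ℕ → ℕ) : ℕ → List ℕ
  | 0 => []
  | s+1 => χ s :: listSeg χ s

def segN (χ : ℕ → ℕ) (s : ℕ) : ℕ := Encodable.encode (listSeg χ s)

lemma listSeg_length (χ : ℕ → ℕ) (s : ℕ) : (listSeg χ s).length = s := by
  induction s with
  | zero => rfl
  | succ s ih => simp [listSeg, ih]

lemma listSeg_reverse_get (χ : ℕ → ℕ) (s n : ℕ) :
    (listSeg χ s).reverse[n]? = if n < s then some (χ n) else none := by
  induction s with
  | zero => simp [listSeg]
  | succ s ih =>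
    simp only [listSeg, List.reverse_cons]
    rcases lt_trichotomy n s with h | h | h
    · rw [List.getElem?_append_left]
      · rw [ih]; simp [h, Nat.lt_succ_of_lt h]
      · simpa [listSeg_length] using h
    · subst h
      rw [List.getElem?_append_right]
      · simp [listSeg_length]
      · simp [listSeg_length]
    · rw [List.getElem?_append_right]
      · simp only [List.length_reverse, listSeg_length]
        rw [if_neg (by omega)]
        apply List.getElem?_eq_none
        simp; omega
      · simp [listSeg_length]; omega

def lookup (σ n : ℕ) : Option ℕ :=
  (Encodable.decode (α := List ℕ) σ).bind fun l => l.reverse[n]?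

lemma lookup_segN (χ : ℕ → ℕ) (s n : ℕ) :
    lookup (segN χ s) n = if n < s then some (χ n) else none := by
  simp [lookup, segN, encodek, listSeg_reverse_get]

lemma segN_succ (χ : ℕ → ℕ) (s : ℕ) :
    segN χ (s+1) = (Nat.pair (χ s) (segN χ s)) + 1 := rfl

lemma recIn_of_natPartrec {O : ℕ →. ℕ} {f : ℕ →. ℕ} (h : Nat.Partrec f) : RecIn O f := by
  induction h with
  | zero => exact RecIn.zero
  | succ => exact RecIn.succ
  | left => exact RecIn.left
  | right => exact RecIn.right
  | pair _ _ ihf ihg => exact RecIn.pair ihf ihg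
  | comp _ _ ihf ihg => exact RecIn.comp ihf ihg
  | prec _ _ ihf ihg => exact RecIn.prec ihf ihg
  | rfind _ ih => exact RecIn.rfind ih

lemma recIn_of_eq {O f g} (h : RecIn O f) (e : ∀ n, f n = g n) : RecIn O g :=
  (funext e : f = g) ▸ h

lemma natPartrec_total {h : ℕ → ℕ} (hc : Computable h) :
    Nat.Partrec (fun x => Part.some (h x)) := Partrec.nat_iff.1 hc

lemma mem_pairSeq (a b : Part ℕ) (v : ℕ) :
    v ∈ (Nat.pair <$> a <*> b) ↔ ∃ x ∈ a, ∃ y ∈ b, v = Nat.pair x y := by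
  simp [Seq.seq, Part.mem_bind_iff, Part.mem_map_iff, eq_comm]

private lemma cu1 : Computable fun n : ℕ => n.unpair.1 :=
  Computable.fst.comp Computable.unpair
private lemma cu2 : Computable fun n : ℕ => n.unpair.2 :=
  Computable.snd.comp Computable.unpair

/-- Use principle: a function partial recursive in a total oracle `χ` is tracked by a plain
partial recursive function taking a finite initial segment of the oracle as extra input. -/
theorem recIn_tracks {χ : ℕ → ℕ} {f : ℕ →. ℕ} (hf : RecIn (fun n => Part.some (χ n)) f) :
    ∃ g : ℕ →. ℕ, Nat.Partrec g ∧
      (∀ n s t v, s ≤ t → v ∈ g (Nat.pair n (segN χ s)) → v ∈ g (Nat.pair n (segN χ t))) ∧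
      (∀ n s v, v ∈ g (Nat.pair n (segN χ s)) → v ∈ f n) ∧
      (∀ n v, v ∈ f n → ∃ s, v ∈ g (Nat.pair n (segN χ s))) := by
  induction hf with
  | zero =>
    exact ⟨pure 0, Nat.Partrec.zero, fun n s t v _ h => h, fun n s v h => h, fun n v h => ⟨0, h⟩⟩
  | succ =>
    refine ⟨fun x => Part.some (x.unpair.1 + 1), natPartrec_total (Computable.succ.comp cu1),
      ?_, ?_, ?_⟩
    · intro n s t v _ h; simpa using h
    · intro n s v h; simpa [Nat.unpair_pair] using h
    · intro n v h; exact ⟨0, by simpa using h⟩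
  | left =>
    refine ⟨fun x => Part.some (x.unpair.1.unpair.1),
      natPartrec_total (cu1.comp cu1), ?_, ?_, ?_⟩
    · intro n s t v _ h; simpa using h
    · intro n s v h; simpa [Nat.unpair_pair] using h
    · intro n v h; exact ⟨0, by simpa using h⟩
  | right =>
    refine ⟨fun x => Part.some (x.unpair.1.unpair.2),
      natPartrec_total (cu2.comp cu1), ?_, ?_, ?_⟩
    · intro n s t v _ h; simpa using h
    · intro n s v h; simpa [Nat.unpair_pair] using h
    · intro n v h; exact ⟨0, by simpa using h⟩
  | oracle =>
    refine ⟨fun x => Part.ofOption (lookup x.unpair.2 x.unpair.1),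
      Partrec.nat_iff.1 (Computable.ofOption
        (Computable.option_bind (Computable.decode.comp cu2)
          (Computable.list_getElem?.comp₂ ((Computable.list_reverse.comp Computable.snd).to₂)
            ((cu1.comp Computable.fst).to₂)))), ?_, ?_, ?_⟩
    · intro n s t v hst h
      simp only [Nat.unpair_pair, Part.mem_ofOption, lookup_segN] at h ⊢
      rcases lt_or_ge n s with h' | h'
      · rw [if_pos h'] at h; rw [if_pos (lt_of_lt_of_le h' hst)]; exact h
      · rw [if_neg (by omega)] at h; cases h
    · intro n s v h
      simp only [Nat.unpair_pair, Part.mem_ofOption, lookup_segN] at h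
      rcases lt_or_ge n s with h' | h'
      · rw [if_pos h'] at h; cases h; simp
      · rw [if_neg (by omega)] at h; cases h
    · intro n v h
      refine ⟨n + 1, ?_⟩
      simp only [Part.mem_some_iff] at h
      simp [Nat.unpair_pair, lookup_segN, Nat.lt_succ_self, h]
  | pair hf' hg' ihf ihg =>
    obtain ⟨gf, pf, mf, sf, cf⟩ := ihf
    obtain ⟨gg, pg, mg, sg, cg⟩ := ihg
    refine ⟨fun x => Nat.pair <$> gf x <*> gg x, Nat.Partrec.pair pf pg, ?_, ?_, ?_⟩
    · intro n s t v hst h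
      rw [mem_pairSeq] at h ⊢
      obtain ⟨x, hx, y, hy, rfl⟩ := h
      exact ⟨x, mf _ _ _ _ hst hx, y, mg _ _ _ _ hst hy, rfl⟩
    · intro n s v h
      rw [mem_pairSeq] at h
      obtain ⟨x, hx, y, hy, rfl⟩ := h
      rw [mem_pairSeq]
      exact ⟨x, sf _ _ _ hx, y, sg _ _ _ hy, rfl⟩
    · intro n v h
      rw [mem_pairSeq] at h
      obtain ⟨x, hx, y, hy, rfl⟩ := h
      obtain ⟨s₁, h₁⟩ := cf _ _ hx
      obtain ⟨s₂, h₂⟩ := cg _ _ hy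
      refine ⟨max s₁ s₂, ?_⟩
      rw [mem_pairSeq]
      exact ⟨x, mf _ _ _ _ (le_max_left _ _) h₁, y, mg _ _ _ _ (le_max_right _ _) h₂, rfl⟩
  | comp hf' hg' ihf ihg =>
    obtain ⟨gf, pf, mf, sf, cf⟩ := ihf
    obtain ⟨gg, pg, mg, sg, cg⟩ := ihg
    have hmem : ∀ x v, v ∈ ((Nat.pair <$> gg x <*> Part.some x.unpair.2) >>= gf) ↔
        ∃ w ∈ gg x, v ∈ gf (Nat.pair w x.unpair.2) := by
      intro x v
      unfold PFun at gg gf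
      simp only [Part.bind_eq_bind, Part.mem_bind_iff, mem_pairSeq]
      constructor
      · rintro ⟨z, ⟨w, hw, y, hy, rfl⟩, hv⟩
        simp only [Part.mem_some_iff] at hy; subst hy
        exact ⟨w, hw, hv⟩
      · rintro ⟨w, hw, hv⟩
        exact ⟨Nat.pair w x.unpair.2, ⟨w, hw, _, Part.mem_some _, rfl⟩, hv⟩
    refine ⟨fun x => (Nat.pair <$> gg x <*> Part.some x.unpair.2) >>= gf,
      Nat.Partrec.comp pf (Nat.Partrec.pair pg Nat.Partrec.right), ?_, ?_, ?_⟩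
    · intro n s t v hst h
      rw [hmem] at h ⊢
      obtain ⟨w, hw, hv⟩ := h
      refine ⟨w, mg _ _ _ _ hst hw, ?_⟩
      simp only [Nat.unpair_pair] at hv ⊢
      exact mf _ _ _ _ hst hv
    · intro n s v h
      rw [hmem] at h
      obtain ⟨w, hw, hv⟩ := h
      simp only [Nat.unpair_pair] at hv
      exact Part.mem_bind_iff.2 ⟨w, sg _ _ _ hw, sf _ _ _ hv⟩
    · intro n v h
      replace h := Part.mem_bind_iff.1 h
      obtain ⟨w, hw, hv⟩ := h
      obtain ⟨s₁, h₁⟩ := cg _ _ hw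
      obtain ⟨s₂, h₂⟩ := cf _ _ hv
      refine ⟨max s₁ s₂, ?_⟩
      rw [hmem]
      refine ⟨w, mg _ _ _ _ (le_max_left _ _) h₁, ?_⟩
      simp only [Nat.unpair_pair]
      exact mf _ _ _ _ (le_max_right _ _) h₂
  | @prec f₀ g₀ hf' hg' ihf ihg =>
    obtain ⟨gf, pf, mf, sf, cf⟩ := ihf
    obtain ⟨gg, pg, mg, sg, cg⟩ := ihg
    have pu1 : Primrec fun n : ℕ => n.unpair.1 := Primrec.fst.comp Primrec.unpair
    have pu2 : Primrec fun n : ℕ => n.unpair.2 := Primrec.snd.comp Primrec.unpair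
    have kmono : ∀ (k a s t v : ℕ), s ≤ t →
        v ∈ (Nat.rec (gf (Nat.pair a (segN χ s)))
          (fun y IH => IH.bind fun i => gg (Nat.pair (Nat.pair a (Nat.pair y i)) (segN χ s))) k :
            Part ℕ) →
        v ∈ (Nat.rec (gf (Nat.pair a (segN χ t)))
          (fun y IH => IH.bind fun i => gg (Nat.pair (Nat.pair a (Nat.pair y i)) (segN χ t))) k :
            Part ℕ) := by
      intro k
      induction k with
      | zero => intro a s t v hst h; exact mf _ _ _ _ hst h
      | succ k ih =>
        intro a s t v hst h
        simp only [Part.mem_bind_iff] at h ⊢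
        obtain ⟨i, hi, hv⟩ := h
        exact ⟨i, ih a s t i hst hi, mg _ _ _ _ hst hv⟩
    have ksound : ∀ (k a s v : ℕ),
        v ∈ (Nat.rec (gf (Nat.pair a (segN χ s)))
          (fun y IH => IH.bind fun i => gg (Nat.pair (Nat.pair a (Nat.pair y i)) (segN χ s))) k :
            Part ℕ) →
        v ∈ (Nat.rec (f₀ a)
          (fun y IH => IH.bind fun i => g₀ (Nat.pair a (Nat.pair y i))) k : Part ℕ) := by
      intro k
      induction k with
      | zero => intro a s v h; exact sf _ _ _ h
      | succ k ih =>
        intro a s v h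
        simp only [Part.mem_bind_iff] at h ⊢
        obtain ⟨i, hi, hv⟩ := h
        exact ⟨i, ih a s i hi, sg _ _ _ hv⟩
    have kcomp : ∀ (k a v : ℕ),
        v ∈ (Nat.rec (f₀ a)
          (fun y IH => IH.bind fun i => g₀ (Nat.pair a (Nat.pair y i))) k : Part ℕ) →
        ∃ s, v ∈ (Nat.rec (gf (Nat.pair a (segN χ s)))
          (fun y IH => IH.bind fun i => gg (Nat.pair (Nat.pair a (Nat.pair y i)) (segN χ s))) k :
            Part ℕ) := by
      intro k
      induction k with
      | zero => intro a v h; exact cf _ _ h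
      | succ k ih =>
        intro a v h
        simp only [Part.mem_bind_iff] at h
        obtain ⟨i, hi, hv⟩ := h
        obtain ⟨s₁, h₁⟩ := ih a i hi
        obtain ⟨s₂, h₂⟩ := cg _ _ hv
        refine ⟨max s₁ s₂, ?_⟩
        simp only [Part.mem_bind_iff]
        exact ⟨i, kmono _ _ _ _ _ (le_max_left _ _) h₁, mg _ _ _ _ (le_max_right _ _) h₂⟩
    have hpart : Nat.Partrec (fun x : ℕ =>
        (Nat.rec (gf (Nat.pair x.unpair.1.unpair.1 x.unpair.2))
          (fun y IH => IH.bind fun i =>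
            gg (Nat.pair (Nat.pair x.unpair.1.unpair.1 (Nat.pair y i)) x.unpair.2))
          x.unpair.1.unpair.2 : Part ℕ)) := by
      apply Partrec.nat_iff.1
      have hbase : Partrec fun x : ℕ => gf (Nat.pair x.unpair.1.unpair.1 x.unpair.2) :=
        (Partrec.nat_iff.2 pf).comp
          (Primrec.to_comp (Primrec₂.natPair.comp (pu1.comp pu1) pu2))
      have hstep : Partrec₂ fun (x : ℕ) (p : ℕ × ℕ) =>
          gg (Nat.pair (Nat.pair x.unpair.1.unpair.1 (Nat.pair p.1 p.2)) x.unpair.2) :=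
        (Partrec.nat_iff.2 pg).comp
          (Primrec.to_comp (Primrec₂.natPair.comp
            (Primrec₂.natPair.comp ((pu1.comp pu1).comp Primrec.fst)
              (Primrec₂.natPair.comp (Primrec.fst.comp Primrec.snd)
                (Primrec.snd.comp Primrec.snd)))
            (pu2.comp Primrec.fst)))
      exact Partrec.nat_rec ((cu2.comp cu1) : Computable fun x : ℕ => x.unpair.1.unpair.2)
        hbase hstep
    refine ⟨_, hpart, ?_, ?_, ?_⟩
    · intro n s t v hst h
      simp only [Nat.unpair_pair] at h ⊢
      exact kmono _ _ _ _ _ hst h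
    · intro n s v h
      simp only [Nat.unpair_pair] at h
      simpa [Nat.unpaired, Part.bind_eq_bind] using ksound _ _ _ _ h
    · intro n v h
      simp only [Nat.unpaired, Part.bind_eq_bind] at h
      obtain ⟨s, hs⟩ := kcomp _ _ _ h
      exact ⟨s, by simpa [Nat.unpair_pair] using hs⟩
  | @rfind f₀ hf' ihf =>
    obtain ⟨gf, pf, mf, sf, cf⟩ := ihf
    have pu1 : Primrec fun n : ℕ => n.unpair.1 := Primrec.fst.comp Primrec.unpair
    have pu2 : Primrec fun n : ℕ => n.unpair.2 := Primrec.snd.comp Primrec.unpair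
    have hmem : ∀ (o : Part ℕ) (b : Bool),
        b ∈ ((fun m => (m = 0 : Bool)) <$> o) ↔ ∃ w ∈ o, decide (w = 0) = b := by
      intro o b; simp [Part.mem_map_iff]
    have tmono : ∀ (x k s t : ℕ) (b : Bool), s ≤ t →
        b ∈ ((fun m => (m = 0 : Bool)) <$> gf (Nat.pair (Nat.pair x k) (segN χ s))) →
        b ∈ ((fun m => (m = 0 : Bool)) <$> gf (Nat.pair (Nat.pair x k) (segN χ t))) := by
      intro x k s t b hst h
      rw [hmem] at h ⊢
      obtain ⟨w, hw, hb⟩ := h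
      exact ⟨w, mf _ _ _ _ hst hw, hb⟩
    have hpart : Nat.Partrec (fun x : ℕ =>
        Nat.rfind fun k => (fun m => m = 0) <$> gf (Nat.pair (Nat.pair x.unpair.1 k) x.unpair.2)) := by
      apply Partrec.nat_iff.1
      apply Partrec.rfind
        (p := fun (x : ℕ) (k : ℕ) =>
          ((fun m => m = 0) <$> gf (Nat.pair (Nat.pair x.unpair.1 k) x.unpair.2) : Part Bool))
      have : Partrec fun q : ℕ × ℕ => gf (Nat.pair (Nat.pair q.1.unpair.1 q.2) q.1.unpair.2) :=
        (Partrec.nat_iff.2 pf).comp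
          (Primrec.to_comp (Primrec₂.natPair.comp
            (Primrec₂.natPair.comp (pu1.comp Primrec.fst) Primrec.snd)
            (pu2.comp Primrec.fst)))
      exact (this.map (((PrimrecPred.decide (Primrec.eq.comp Primrec.snd (Primrec.const 0))).to_comp).to₂))
    refine ⟨_, hpart, ?_, ?_, ?_⟩
    · intro n s t v hst h
      simp only [Nat.unpair_pair] at h ⊢
      obtain ⟨htrue, hmin⟩ := Nat.mem_rfind.1 h
      refine Nat.mem_rfind.2 ⟨tmono _ _ _ _ _ hst htrue, fun {m} hm => tmono _ _ _ _ _ hst (hmin hm)⟩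
    · intro n s v h
      simp only [Nat.unpair_pair] at h
      obtain ⟨htrue, hmin⟩ := Nat.mem_rfind.1 h
      refine Nat.mem_rfind.2 ⟨?_, ?_⟩
      · rw [hmem] at htrue ⊢
        obtain ⟨w, hw, hb⟩ := htrue
        exact ⟨w, sf _ _ _ hw, hb⟩
      · intro m hm
        have := hmin hm
        rw [hmem] at this ⊢
        obtain ⟨w, hw, hb⟩ := this
        exact ⟨w, sf _ _ _ hw, hb⟩
    · intro n v h
      obtain ⟨htrue, hmin⟩ := Nat.mem_rfind.1 h
      rw [hmem] at htrue
      obtain ⟨w, hw, hb⟩ := htrue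
      obtain ⟨s₀, h₀⟩ := cf _ _ hw
      have H : ∀ j, ∃ s, j < v →
          false ∈ ((fun m => (m = 0 : Bool)) <$> gf (Nat.pair (Nat.pair n j) (segN χ s))) := by
        intro j
        by_cases hj : j < v
        · have := hmin hj
          rw [hmem] at this
          obtain ⟨w', hw', hb'⟩ := this
          obtain ⟨s', hs'⟩ := cf _ _ hw'
          exact ⟨s', fun _ => (hmem _ _).2 ⟨w', hs', hb'⟩⟩
        · exact ⟨0, fun h => absurd h hj⟩
      choose sfn hsfn using H
      refine ⟨max s₀ ((Finset.range v).sup sfn), ?_⟩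
      simp only [Nat.unpair_pair]
      refine Nat.mem_rfind.2 ⟨?_, ?_⟩
      · exact (hmem _ _).2 ⟨w, mf _ _ _ _ (le_max_left _ _) h₀, hb⟩
      · intro m hm
        exact tmono _ _ _ _ _
          (le_trans (Finset.le_sup (Finset.mem_range.2 hm)) (le_max_right _ _)) (hsfn m hm)


lemma ncard_Iio (n : ℕ) : (Set.Iio n).ncard = n := by
  rw [← Finset.coe_Iio, Set.ncard_coe_finset, Nat.card_Iio]

lemma ncard_split (D : Set ℕ) (n : ℕ) :
    (D ∩ Set.Iio n).ncard + (Dᶜ ∩ Set.Iio n).ncard = n := by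
  rw [← Set.ncard_union_eq
    (Set.disjoint_of_subset Set.inter_subset_left Set.inter_subset_left
      disjoint_compl_right)
    ((Set.finite_Iio n).subset Set.inter_subset_right)
    ((Set.finite_Iio n).subset Set.inter_subset_right)]
  rw [← Set.union_inter_distrib_right, Set.union_compl_self, Set.univ_inter, ncard_Iio]

lemma ncard_disj_le (D S : Set ℕ) (h : Disjoint D S) (n : ℕ) :
    (D ∩ Set.Iio n).ncard + (S ∩ Set.Iio n).ncard ≤ n := by
  rw [← Set.ncard_union_eq
    (Set.disjoint_of_subset Set.inter_subset_left Set.inter_subset_left h)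
    ((Set.finite_Iio n).subset Set.inter_subset_right)
    ((Set.finite_Iio n).subset Set.inter_subset_right)]
  calc ((D ∩ Set.Iio n) ∪ (S ∩ Set.Iio n)).ncard ≤ (Set.Iio n).ncard :=
        Set.ncard_le_ncard (by intro x hx; rcases hx with h | h; exacts [h.2, h.2])
          (Set.finite_Iio n)
    _ = n := ncard_Iio n

lemma sq_le_two_pow {k : ℕ} (hk : 4 ≤ k) : k * k ≤ 2 ^ k := by
  induction k with
  | zero => omega
  | succ k ih =>
    rcases Nat.lt_or_ge k 4 with h | h
    · interval_cases k <;> simp_all <;> omega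
    · have h1 : k * k ≤ 2 ^ k := ih (by omega)
      have h2 : 2 * k + 1 ≤ k * k := by nlinarith
      have : (k+1) * (k+1) = k * k + (2 * k + 1) := by ring
      rw [this, pow_succ]
      omega

lemma log_le_sqrt {n : ℕ} (hn : 9 ≤ n) : Nat.log 2 n ≤ Nat.sqrt n := by
  have hs : 3 ≤ Nat.sqrt n := Nat.le_sqrt.2 (by omega)
  have h1 : n < 2 ^ (Nat.sqrt n + 1) := by
    calc n < (Nat.sqrt n + 1) * (Nat.sqrt n + 1) := Nat.lt_succ_sqrt n
      _ ≤ 2 ^ (Nat.sqrt n + 1) := sq_le_two_pow (by omega)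
  by_contra hcon
  push_neg at hcon
  have : 2 ^ (Nat.sqrt n + 1) ≤ 2 ^ (Nat.log 2 n) := Nat.pow_le_pow_right (by norm_num) hcon
  have := le_trans this (Nat.pow_log_le_self 2 (by omega))
  omega

lemma sqrt_tendsto : Tendsto Nat.sqrt atTop atTop :=
  tendsto_atTop_atTop.2 fun b => ⟨b * b, fun n hn => Nat.le_sqrt.2 hn⟩

lemma count_powTwo (n : ℕ) :
    (({0} ∪ powTwo) ∩ Set.Iio n).ncard ≤ Nat.log 2 n + 2 := by
  classical
  calc (({0} ∪ powTwo) ∩ Set.Iio n).ncard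
      ≤ (insert 0 ((Finset.range (Nat.log 2 n + 1)).image (2 ^ ·)) : Finset ℕ).card := by
        rw [← Set.ncard_coe_finset]
        apply Set.ncard_le_ncard _ (Finset.finite_toSet _)
        rintro x ⟨hx, hxn⟩
        simp only [Finset.coe_insert, Finset.coe_image, Finset.coe_range]
        rcases hx with h0 | ⟨m, rfl⟩
        · left; exact h0
        · right
          refine ⟨m, ?_, rfl⟩
          simp only [Set.mem_Iio] at hxn
          have hn0 : n ≠ 0 := by
            have := (Nat.pow_pos (show 0 < 2 by norm_num) : 0 < 2 ^ m)
            omega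
          have : 2 ^ m ≤ n := le_of_lt hxn
          have := (Nat.le_log_iff_pow_le (by norm_num) hn0).2 this
          simp only [Set.mem_Iio]; omega
    _ ≤ (Finset.range (Nat.log 2 n + 1)).card + 1 := by
        apply le_trans (Finset.card_insert_le _ _)
        rw [add_le_add_iff_right]
        exact Finset.card_image_le
    _ = Nat.log 2 n + 2 := by rw [Finset.card_range]

lemma density_nonPow : Density1 {n : ℕ | n ≠ 0 ∧ n ∉ powTwo} := by
  set D : Set ℕ := {n : ℕ | n ≠ 0 ∧ n ∉ powTwo} with hD
  have hcompl : Dᶜ = {0} ∪ powTwo := by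
    ext x
    simp [hD, Set.mem_union, not_and_or, or_comm, em]
    tauto
  have hub : ∀ n : ℕ, 1 ≤ n → partialDensity D n ≤ 1 := by
    intro n hn
    rw [partialDensity, div_le_one (by exact_mod_cast hn)]
    exact_mod_cast le_trans (Set.ncard_le_ncard Set.inter_subset_right (Set.finite_Iio n))
      (le_of_eq (ncard_Iio n))
  have hlb : ∀ n : ℕ, 1 ≤ n →
      1 - ((Nat.log 2 n + 2 : ℕ) : ℝ) / n ≤ partialDensity D n := by
    intro n hn
    have hsplit := ncard_split D n
    have hc : (Dᶜ ∩ Set.Iio n).ncard ≤ Nat.log 2 n + 2 := by rw [hcompl]; exact count_powTwo n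
    rw [partialDensity, sub_le_iff_le_add, ← add_div, le_div_iff₀ (by exact_mod_cast hn)]
    push_cast
    rw [one_mul]
    have : (n : ℝ) = ((D ∩ Set.Iio n).ncard : ℝ) + ((Dᶜ ∩ Set.Iio n).ncard : ℝ) := by
      exact_mod_cast hsplit.symm
    rw [this]
    have : ((Dᶜ ∩ Set.Iio n).ncard : ℝ) ≤ (Nat.log 2 n : ℝ) + 2 := by exact_mod_cast hc
    linarith
  have hzero : Tendsto (fun n : ℕ => ((Nat.log 2 n + 2 : ℕ) : ℝ) / n) atTop (nhds 0) := by
    apply squeeze_zero' (f := fun n : ℕ => ((Nat.log 2 n + 2 : ℕ) : ℝ) / n)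
      (g := fun n : ℕ => (3 : ℝ) / (Nat.sqrt n))
    · filter_upwards [eventually_ge_atTop 1] with n hn
      positivity
    · filter_upwards [eventually_ge_atTop 9] with n hn
      have h1 : Nat.log 2 n ≤ Nat.sqrt n := log_le_sqrt hn
      have h2 : 3 ≤ Nat.sqrt n := Nat.le_sqrt.2 (by omega)
      have h3 : Nat.sqrt n * Nat.sqrt n ≤ n := Nat.sqrt_le n
      have hs0 : (0:ℝ) < (Nat.sqrt n : ℝ) := by exact_mod_cast Nat.lt_of_lt_of_le (by norm_num) h2
      have hn0 : (0:ℝ) < (n:ℝ) := by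
        have : 9 ≤ n := hn; positivity
      rw [div_le_div_iff₀ hn0 hs0]
      have hcast : ((Nat.log 2 n + 2 : ℕ) : ℝ) ≤ (Nat.sqrt n : ℝ) + 2 := by
        push_cast; exact_mod_cast by omega
      calc ((Nat.log 2 n + 2 : ℕ) : ℝ) * (Nat.sqrt n : ℝ)
          ≤ ((Nat.sqrt n : ℝ) + 2) * (Nat.sqrt n : ℝ) := by nlinarith
        _ ≤ 3 * (n : ℝ) := by
            have h3' : ((Nat.sqrt n : ℕ) : ℝ) * ((Nat.sqrt n : ℕ) : ℝ) ≤ (n : ℝ) := by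
              exact_mod_cast h3
            have h2' : (3:ℝ) ≤ ((Nat.sqrt n : ℕ) : ℝ) := by exact_mod_cast h2
            nlinarith [h3', h2']
    · exact (tendsto_const_div_atTop_nhds_zero_nat 3).comp sqrt_tendsto
  have hone : Tendsto (fun n : ℕ => 1 - ((Nat.log 2 n + 2 : ℕ) : ℝ) / n) atTop (nhds 1) := by
    have := tendsto_const_nhds (x := (1:ℝ)) (f := atTop (α := ℕ)) |>.sub hzero
    simpa using this
  refine tendsto_of_tendsto_of_tendsto_of_le_of_le' hone tendsto_const_nhds ?_ ?_
  · filter_upwards [eventually_ge_atTop 1] with n hn using hlb n hn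
  · filter_upwards [eventually_ge_atTop 1] with n hn using hub n hn

lemma density1_meets {D : Set ℕ} (hD : Density1 D) (m : ℕ) :
    ∃ k : ℕ, (2 * k + 3) * 2 ^ m ∈ D := by
  by_contra hcon
  push_neg at hcon
  set S : Set ℕ := Set.range (fun k => (2 * k + 3) * 2 ^ m) with hS
  have hdisj : Disjoint D S := by
    rw [Set.disjoint_right]
    rintro x ⟨k, rfl⟩
    exact hcon k
  have hinj : Function.Injective (fun k => (2 * k + 3) * 2 ^ m) := by
    intro a b h
    simp only at h
    have := Nat.eq_of_mul_eq_mul_right (Nat.pow_pos (by norm_num)) h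
    omega
  have hcount : ∀ n : ℕ, 2 ^ (m + 3) ≤ n → n / 2 ^ (m + 3) ≤ (S ∩ Set.Iio n).ncard := by
    intro n hn
    set K := n / 2 ^ (m + 3) with hK
    have hsub : ↑((Finset.range K).image (fun k => (2 * k + 3) * 2 ^ m)) ⊆ S ∩ Set.Iio n := by
      intro x hx
      simp only [Finset.coe_image, Finset.coe_range, Set.mem_image, Set.mem_Iio] at hx
      obtain ⟨k, hk, rfl⟩ := hx
      constructor
      · exact ⟨k, rfl⟩
      · simp only [Set.mem_Iio]
        have h1 : 2 ^ (m + 3) * K ≤ n := by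
          rw [hK, mul_comm]; exact Nat.div_mul_le_self n _
        have h2 : (2 * k + 3) * 2 ^ m ≤ (2 * K + 1) * 2 ^ m := by
          apply Nat.mul_le_mul_right
          omega
        have h3 : (2 * K + 1) * 2 ^ m = 2 ^ (m+1) * K + 2 ^ m := by ring
        have h4 : 4 * (2 ^ (m+1) * K) = 2 ^ (m+3) * K := by ring
        have h5 : 2 ^ (m+1) * K ≤ n / 4 := by
          rw [Nat.le_div_iff_mul_le (by norm_num)]
          omega
        have h6 : 2 ^ m ≤ n / 8 := by
          rw [Nat.le_div_iff_mul_le (by norm_num)]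
          have : 2 ^ m * 8 = 2 ^ (m + 3) := by ring
          omega
        have hn8 : 8 ≤ n := by
          have h2m : 0 < 2 ^ m := Nat.pow_pos (by norm_num)
          have : 2 ^ (m + 3) = 8 * 2 ^ m := by ring
          omega
        have h7 : n / 4 + n / 8 < n := by omega
        omega
    calc K = ((Finset.range K).image (fun k => (2 * k + 3) * 2 ^ m)).card := by
          rw [Finset.card_image_of_injective _ hinj, Finset.card_range]
      _ = (↑((Finset.range K).image (fun k => (2 * k + 3) * 2 ^ m)) : Set ℕ).ncard := by
          rw [Set.ncard_coe_finset]
      _ ≤ (S ∩ Set.Iio n).ncard :=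
          Set.ncard_le_ncard hsub ((Set.finite_Iio n).subset Set.inter_subset_right)
  -- eventual contradiction
  set P : ℝ := (2 : ℝ) ^ (m + 3) with hP
  have hP0 : 0 < P := by positivity
  have hev : ∀ᶠ n in atTop, 1 - 1 / (2 * P) < partialDensity D n := by
    apply hD.eventually (eventually_gt_nhds ?_)
    have : 0 < 1 / (2 * P) := by positivity
    linarith
  obtain ⟨n, hn1, hn2⟩ := (hev.and (eventually_ge_atTop (2 ^ (m + 4)))).exists
  have hnP : 2 ^ (m + 3) ≤ n := le_trans (Nat.pow_le_pow_right (by norm_num) (by omega)) hn2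
  have hn0 : 0 < n := lt_of_lt_of_le (Nat.pow_pos (by norm_num)) hnP
  set K := n / 2 ^ (m + 3) with hK
  have hcard : (D ∩ Set.Iio n).ncard + K ≤ n :=
    le_trans (by gcongr; exact hcount n hnP) (ncard_disj_le D S hdisj n)
  have hpd : partialDensity D n ≤ 1 - (K : ℝ) / n := by
    rw [partialDensity]
    have h1 : ((D ∩ Set.Iio n).ncard : ℝ) ≤ (n : ℝ) - K := by
      have : (D ∩ Set.Iio n).ncard ≤ n - K := by omega
      have hKn : K ≤ n := Nat.div_le_self n _
      calc ((D ∩ Set.Iio n).ncard : ℝ) ≤ ((n - K : ℕ) : ℝ) := by exact_mod_cast this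
        _ = (n : ℝ) - K := by push_cast [hKn]; ring
    rw [div_le_iff₀ (by exact_mod_cast hn0)]
    have hn0' : (0:ℝ) < n := by exact_mod_cast hn0
    field_simp
    linarith
  -- now derive contradiction
  have hKeq : (K : ℝ) * P + ((n % 2 ^ (m+3) : ℕ) : ℝ) = n := by
    rw [hP]
    have := Nat.div_add_mod n (2 ^ (m + 3))
    push_cast
    rw [mul_comm]
    exact_mod_cast congrArg (Nat.cast : ℕ → ℝ) this
  have hrlt : ((n % 2 ^ (m+3) : ℕ) : ℝ) < P := by
    rw [hP]; exact_mod_cast Nat.mod_lt n (Nat.pow_pos (by norm_num))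
  have hn2P : 2 * P ≤ (n : ℝ) := by
    rw [hP]
    have : ((2 ^ (m + 4) : ℕ) : ℝ) ≤ (n : ℝ) := by exact_mod_cast hn2
    calc 2 * (2:ℝ) ^ (m+3) = (2:ℝ) ^ (m + 4) := by ring
      _ = ((2 ^ (m + 4) : ℕ) : ℝ) := by push_cast; ring
      _ ≤ (n : ℝ) := this
  have hfinal : (K : ℝ) / n < 1 / (2 * P) := by
    linarith [hn1, hpd]
  have hn0' : (0:ℝ) < n := by exact_mod_cast hn0
  have hmul : (K : ℝ) * (2 * P) < 1 * n := by
    rw [div_lt_div_iff₀ hn0' (by positivity)] at hfinal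
    exact hfinal
  nlinarith [hKeq, hrlt, hn2P, hmul]

/-- the option-valued test function for the search for ν₂ -/
def nuTest (n j : ℕ) : Option Bool :=
  if n % 2 ^ (j+1) = 0 then some false else if n = 2 ^ j then none else some true

def predP : ℕ →. ℕ := fun n => Nat.rfind fun j => Part.ofOption (nuTest n j)

lemma predP_partrec : Nat.Partrec predP := by
  apply Partrec.nat_iff.1
  apply Partrec.rfind (p := fun n j => (Part.ofOption (nuTest n j) : Part Bool))
  apply Computable.ofOption
  have hpow : Primrec₂ (fun a b : ℕ => a ^ b) := Primrec₂.unpaired'.1 Nat.Primrec.pow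
  have h1 : PrimrecPred fun q : ℕ × ℕ => q.1 % 2 ^ (q.2 + 1) = 0 :=
    Primrec.eq.comp
      (Primrec.nat_mod.comp Primrec.fst
        (hpow.comp (Primrec.const 2) (Primrec.succ.comp Primrec.snd)))
      (Primrec.const 0)
  have h2 : PrimrecPred fun q : ℕ × ℕ => q.1 = 2 ^ q.2 :=
    Primrec.eq.comp Primrec.fst (hpow.comp (Primrec.const 2) Primrec.snd)
  exact (Primrec.to_comp
    (Primrec.ite h1 (Primrec.const (some false))
      (Primrec.ite h2 (Primrec.const none) (Primrec.const (some true))))).to₂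

lemma predP_zero : ¬ (predP 0).Dom := by
  intro h
  obtain ⟨t, ht⟩ := Part.dom_iff_mem.1 h
  have := Nat.rfind_spec ht
  simp [nuTest] at this

lemma predP_pow (e : ℕ) : ¬ (predP (2 ^ e)).Dom := by
  intro h
  obtain ⟨t, ht⟩ := Part.dom_iff_mem.1 h
  have htrue := Nat.rfind_spec ht
  have h2e : (0:ℕ) < 2 ^ e := Nat.pow_pos (by norm_num)
  have hmod : ∀ j, 2 ^ e % 2 ^ (j+1) = 0 ↔ j + 1 ≤ e := by
    intro j
    rw [← Nat.dvd_iff_mod_eq_zero]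
    exact Nat.pow_dvd_pow_iff_le_right (by norm_num)
  -- from htrue : true ∈ nuTest (2^e) t
  by_cases hc : 2 ^ e % 2 ^ (t+1) = 0
  · simp [nuTest, hc] at htrue
  · by_cases hc2 : (2:ℕ) ^ e = 2 ^ t
    · simp [nuTest, hc, hc2] at htrue
    · -- then e < t
      have het : e ≠ t := fun h => hc2 (by rw [h])
      have hle : e ≤ t := by
        have := (hmod t).not.1 hc
        omega
      have helt : e < t := lt_of_le_of_ne hle het
      have hfalse := Nat.rfind_min ht helt
      have hc' : ¬ (2 ^ e % 2 ^ (e+1) = 0) := by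
        rw [hmod]; omega
      simp [nuTest, hc'] at hfalse
  
lemma predP_eq {n : ℕ} (h0 : n ≠ 0) (hp : n ∉ powTwo) :
    predP n = Part.some (padicValNat 2 n) := by
  apply Part.eq_some_iff.2
  set v := padicValNat 2 n with hv
  apply Nat.mem_rfind.2
  constructor
  · have hnd : ¬ (2 ^ (v+1) ∣ n) := pow_succ_padicValNat_not_dvd h0
    have hc : ¬ (n % 2 ^ (v+1) = 0) := fun h => hnd (Nat.dvd_iff_mod_eq_zero.2 h)
    have hc2 : n ≠ 2 ^ v := fun h => hp ⟨v, h⟩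
    simp [nuTest, hc, hc2]
  · intro j hj
    have hdvd : 2 ^ (j+1) ∣ n :=
      dvd_trans (pow_dvd_pow 2 (by omega)) pow_padicValNat_dvd
    have hc : n % 2 ^ (j+1) = 0 := Nat.dvd_iff_mod_eq_zero.1 hdvd
    simp [nuTest, hc]

theorem easy_dir {A B C : Set ℕ} (ht : TuringComputes C A) :
    GenericallyComputes C (asymJoin A B) := by
  classical
  refine ⟨fun n => predP n >>= chi A, RecIn.comp ht (recIn_of_natPartrec predP_partrec),
    ?_, ?_, ?_, ?_⟩
  · -- density of domain
    have hdom : {n : ℕ | ((fun n => predP n >>= chi A) n).Dom} = {n : ℕ | n ≠ 0 ∧ n ∉ powTwo} := by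
      ext n
      simp only [Set.mem_setOf_eq]
      constructor
      · intro h
        obtain ⟨w, hw⟩ := Part.dom_iff_mem.1 h
        erw [Part.bind_eq_bind, Part.mem_bind_iff] at hw
        obtain ⟨j, hj, _⟩ := hw
        have hd : (predP n).Dom := Part.dom_iff_mem.2 ⟨j, hj⟩
        constructor
        · rintro rfl; exact predP_zero hd
        · rintro ⟨e, rfl⟩; exact predP_pow e hd
      · rintro ⟨h0, hp⟩
        erw [Part.bind_eq_bind]
        refine Part.dom_iff_mem.2 ⟨if padicValNat 2 n ∈ A then 1 else 0, ?_⟩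
        apply Part.mem_bind_iff.2
        exact ⟨padicValNat 2 n, by rw [predP_eq h0 hp]; simp, by simp [chi]⟩
    rw [hdom]
    exact density_nonPow
  · intro n v hv
    replace hv := Part.mem_bind_iff.1 hv
    obtain ⟨j, _, hj⟩ := hv
    simp only [chi, Part.mem_some_iff] at hj
    split at hj <;> simp [hj]
  · intro n h1
    replace h1 := Part.mem_bind_iff.1 h1
    obtain ⟨j, hj, hval⟩ := h1
    have hd : (predP n).Dom := Part.dom_iff_mem.2 ⟨j, hj⟩
    have h0 : n ≠ 0 := by rintro rfl; exact predP_zero hd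
    have hp : n ∉ powTwo := by rintro ⟨e, rfl⟩; exact predP_pow e hd
    rw [predP_eq h0 hp, Part.mem_some_iff] at hj
    subst hj
    simp only [chi, Part.mem_some_iff] at hval
    have hA : padicValNat 2 n ∈ A := by
      by_contra hna
      rw [if_neg hna] at hval
      exact absurd hval.symm (by norm_num)
    exact Or.inl ⟨⟨Nat.one_le_iff_ne_zero.2 h0, hA⟩, hp⟩
  · intro n h1
    replace h1 := Part.mem_bind_iff.1 h1
    obtain ⟨j, hj, hval⟩ := h1
    have hd : (predP n).Dom := Part.dom_iff_mem.2 ⟨j, hj⟩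
    have h0 : n ≠ 0 := by rintro rfl; exact predP_zero hd
    have hp : n ∉ powTwo := by rintro ⟨e, rfl⟩; exact predP_pow e hd
    rw [predP_eq h0 hp, Part.mem_some_iff] at hj
    subst hj
    simp only [chi, Part.mem_some_iff] at hval
    have hA : padicValNat 2 n ∉ A := by
      intro hna
      rw [if_pos hna] at hval
      exact absurd hval.symm (by norm_num)
    intro hmem
    rcases hmem with ⟨⟨_, hv⟩, _⟩ | ⟨e, _, rfl⟩
    · exact hA hv
    · exact hp ⟨e, rfl⟩


def EV : ℕ → Nat.Partrec.Code → ℕ → Option ℕ := Nat.Partrec.Code.evaln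

lemma EV_prim : Primrec fun a : (ℕ × Nat.Partrec.Code) × ℕ => EV a.1.1 a.1.2 a.2 :=
  Nat.Partrec.Code.primrec_evaln

lemma EV_complete {c : Nat.Partrec.Code} {n x : ℕ} :
    x ∈ Nat.Partrec.Code.eval c n ↔ ∃ k, x ∈ EV k c n :=
  Nat.Partrec.Code.evaln_complete

lemma EV_sound {k : ℕ} {c : Nat.Partrec.Code} {n x : ℕ} :
    x ∈ EV k c n → x ∈ Nat.Partrec.Code.eval c n :=
  Nat.Partrec.Code.evaln_sound

attribute [irreducible] EV

open Classical in
noncomputable def chiF (C : Set ℕ) : ℕ → ℕ := fun n => if n ∈ C then 1 else 0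

lemma chi_eq (C : Set ℕ) : chi C = fun n => Part.some (chiF C n) := rfl

private lemma pu1 : Primrec fun n : ℕ => n.unpair.1 := Primrec.fst.comp Primrec.unpair
private lemma pu2 : Primrec fun n : ℕ => n.unpair.2 := Primrec.snd.comp Primrec.unpair
private lemma hpow : Primrec₂ (fun a b : ℕ => a ^ b) := Primrec₂.unpaired'.1 Nat.Primrec.pow

set_option maxHeartbeats 1000000 in
/-- `RecIn` computes the oracle segments. -/
lemma recIn_segN (C : Set ℕ) :
    RecIn (chi C) (fun x : ℕ => Part.some (segN (chiF C) x.unpair.2)) := by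
  have hy : RecIn (chi C) (fun x : ℕ => Part.some x.unpair.2.unpair.1) :=
    recIn_of_natPartrec (natPartrec_total (Primrec.to_comp (pu1.comp pu2)))
  have hor : RecIn (chi C) (fun x : ℕ => Part.some (chiF C x.unpair.2.unpair.1)) := by
    refine recIn_of_eq (RecIn.comp RecIn.oracle hy) fun n => ?_
    simp [chi_eq]
  have hi : RecIn (chi C) (fun x : ℕ => Part.some x.unpair.2.unpair.2) :=
    recIn_of_natPartrec (natPartrec_total (Primrec.to_comp (pu2.comp pu2)))
  have hpair := RecIn.pair hor hi
  have hgF : RecIn (chi C) (fun x : ℕ =>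
      Part.some ((Nat.pair (chiF C x.unpair.2.unpair.1) x.unpair.2.unpair.2) + 1)) := by
    refine recIn_of_eq (RecIn.comp RecIn.succ hpair) fun n => ?_
    simp [Seq.seq, PFun.coe_val]
    erw [Part.bind_eq_bind, Part.bind_some]; rfl
  have hprec := RecIn.prec RecIn.zero hgF
  refine recIn_of_eq hprec fun x => ?_
  have key : ∀ (k a : ℕ),
      (Nat.rec ((pure 0 : ℕ →. ℕ) a)
        (fun y IH => IH >>= fun i =>
          (fun x : ℕ => Part.some ((Nat.pair (chiF C x.unpair.2.unpair.1)
            x.unpair.2.unpair.2) + 1)) (Nat.pair a (Nat.pair y i))) k : Part ℕ)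
        = Part.some (segN (chiF C) k) := by
    intro k a
    induction k with
    | zero => rfl
    | succ k ih =>
      have hred : (Nat.rec ((pure 0 : ℕ →. ℕ) a)
          (fun y IH => IH >>= fun i =>
            (fun x : ℕ => Part.some ((Nat.pair (chiF C x.unpair.2.unpair.1)
              x.unpair.2.unpair.2) + 1)) (Nat.pair a (Nat.pair y i))) (k+1) : Part ℕ)
          = (Nat.rec ((pure 0 : ℕ →. ℕ) a)
          (fun y IH => IH >>= fun i =>
            (fun x : ℕ => Part.some ((Nat.pair (chiF C x.unpair.2.unpair.1)
              x.unpair.2.unpair.2) + 1)) (Nat.pair a (Nat.pair y i))) k : Part ℕ) >>= fun i =>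
            (fun x : ℕ => Part.some ((Nat.pair (chiF C x.unpair.2.unpair.1)
              x.unpair.2.unpair.2) + 1)) (Nat.pair a (Nat.pair k i)) := rfl
      rw [hred, ih]
      simp [Nat.unpair_pair, segN_succ]
  exact key x.unpair.2 x.unpair.1

def W1 (c : Nat.Partrec.Code) : ℕ → ℕ := fun z =>
  bif (EV z.unpair.1.unpair.2.unpair.2.unpair.2 c
      (Nat.pair ((2 * z.unpair.1.unpair.2.unpair.1 + 3) * 2 ^ z.unpair.1.unpair.1)
        z.unpair.2)).isSome
  then 0 else 1

def W2 (c : Nat.Partrec.Code) : ℕ → ℕ := fun z =>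
  (EV z.unpair.1.unpair.2.unpair.2.unpair.2 c
      (Nat.pair ((2 * z.unpair.1.unpair.2.unpair.1 + 3) * 2 ^ z.unpair.1.unpair.1)
        z.unpair.2)).getD 0

lemma evalnW_prim (c : Nat.Partrec.Code) :
    Primrec (fun z : ℕ => EV z.unpair.1.unpair.2.unpair.2.unpair.2 c
      (Nat.pair ((2 * z.unpair.1.unpair.2.unpair.1 + 3) * 2 ^ z.unpair.1.unpair.1)
        z.unpair.2)) := by
  have hs2 : Primrec fun z : ℕ => z.unpair.1.unpair.2.unpair.2.unpair.2 :=
    pu2.comp (pu2.comp (pu2.comp pu1))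
  have hk : Primrec fun z : ℕ => z.unpair.1.unpair.2.unpair.1 := pu1.comp (pu2.comp pu1)
  have hm : Primrec fun z : ℕ => z.unpair.1.unpair.1 := pu1.comp pu1
  have hnn : Primrec fun z : ℕ => (2 * z.unpair.1.unpair.2.unpair.1 + 3) * 2 ^ z.unpair.1.unpair.1 :=
    Primrec.nat_mul.comp
      (Primrec.nat_add.comp (Primrec.nat_mul.comp (Primrec.const 2) hk) (Primrec.const 3))
      (hpow.comp (Primrec.const 2) hm)
  have hin : Primrec fun z : ℕ =>
      Nat.pair ((2 * z.unpair.1.unpair.2.unpair.1 + 3) * 2 ^ z.unpair.1.unpair.1) z.unpair.2 :=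
    Primrec₂.natPair.comp hnn pu2
  have H := EV_prim.comp ((hs2.pair (Primrec.const c)).pair hin)
  exact H.of_eq fun z => rfl

lemma W1_comp (c : Nat.Partrec.Code) : Computable (W1 c) :=
  Primrec.to_comp (Primrec.cond (Primrec.option_isSome.comp (evalnW_prim c))
    (Primrec.const 0) (Primrec.const 1))

lemma W2_comp (c : Nat.Partrec.Code) : Computable (W2 c) :=
  Primrec.to_comp (Primrec.option_getD.comp (evalnW_prim c) (Primrec.const 0))

/-- the test function for the search -/
noncomputable def TstF (C : Set ℕ) (c : Nat.Partrec.Code) : ℕ →. ℕ := fun x =>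
  Part.some (W1 c (Nat.pair x (segN (chiF C) x.unpair.2.unpair.2.unpair.1)))

noncomputable def VF (C : Set ℕ) (c : Nat.Partrec.Code) : ℕ →. ℕ := fun y =>
  Part.some (W2 c (Nat.pair y (segN (chiF C) y.unpair.2.unpair.2.unpair.1)))

private lemma aux_seg_ext (C : Set ℕ) :
    RecIn (chi C) (fun x : ℕ => Part.some (segN (chiF C) x.unpair.2.unpair.2.unpair.1)) := by
  have hmk : Computable fun x : ℕ => Nat.pair 0 x.unpair.2.unpair.2.unpair.1 :=
    Primrec.to_comp (Primrec₂.natPair.comp (Primrec.const 0) (pu1.comp (pu2.comp pu2)))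
  refine recIn_of_eq (RecIn.comp (recIn_segN C) (recIn_of_natPartrec (natPartrec_total hmk)))
    fun n => ?_
  simp

private lemma recIn_with_seg {C : Set ℕ} {W : ℕ → ℕ} (hW : Computable W) :
    RecIn (chi C) (fun x : ℕ =>
      Part.some (W (Nat.pair x (segN (chiF C) x.unpair.2.unpair.2.unpair.1)))) := by
  have hid : RecIn (chi C) (fun x : ℕ => Part.some x) :=
    recIn_of_natPartrec (natPartrec_total Computable.id)
  refine recIn_of_eq (RecIn.comp (recIn_of_natPartrec (natPartrec_total hW))
    (RecIn.pair hid (aux_seg_ext C))) fun n => ?_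
  simp [Seq.seq]

lemma TstF_recIn (C : Set ℕ) (c : Nat.Partrec.Code) : RecIn (chi C) (TstF C c) :=
  recIn_with_seg (W1_comp c)

lemma VF_recIn (C : Set ℕ) (c : Nat.Partrec.Code) : RecIn (chi C) (VF C c) :=
  recIn_with_seg (W2_comp c)

noncomputable def RF (C : Set ℕ) (c : Nat.Partrec.Code) : ℕ →. ℕ := fun a =>
  Nat.rfind fun n => (fun m => m = 0) <$> TstF C c (Nat.pair a n)

lemma RF_recIn (C : Set ℕ) (c : Nat.Partrec.Code) : RecIn (chi C) (RF C c) :=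
  RecIn.rfind (TstF_recIn C c)

noncomputable def FF (C : Set ℕ) (c : Nat.Partrec.Code) : ℕ →. ℕ := fun n =>
  (Nat.pair <$> (fun x : ℕ => Part.some x) n <*> RF C c n) >>= VF C c

lemma FF_recIn (C : Set ℕ) (c : Nat.Partrec.Code) : RecIn (chi C) (FF C c) :=
  RecIn.comp (VF_recIn C c)
    (RecIn.pair (recIn_of_natPartrec (natPartrec_total Computable.id)) (RF_recIn C c))

lemma nn_ne_zero (m k : ℕ) : (2 * k + 3) * 2 ^ m ≠ 0 := by positivity

lemma nn_padic (m k : ℕ) : padicValNat 2 ((2 * k + 3) * 2 ^ m) = m := by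
  haveI : Fact (Nat.Prime 2) := ⟨Nat.prime_two⟩
  rw [padicValNat.mul (by omega) (by positivity)]
  rw [padicValNat.eq_zero_of_not_dvd (by omega), padicValNat.prime_pow]
  omega

lemma nn_not_powTwo (m k : ℕ) : (2 * k + 3) * 2 ^ m ∉ powTwo := by
  rintro ⟨j, hj⟩
  have h1 : padicValNat 2 ((2 * k + 3) * 2 ^ m) = m := nn_padic m k
  haveI : Fact (Nat.Prime 2) := ⟨Nat.prime_two⟩
  rw [hj, padicValNat.prime_pow] at h1
  rw [h1] at hj
  have h2 : (2 * k + 3) * 2 ^ m = 1 * 2 ^ m := by rw [one_mul]; exact hj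
  have := Nat.eq_of_mul_eq_mul_right (Nat.pow_pos (by norm_num)) h2
  omega

theorem hard_dir {A B C : Set ℕ} (h : GenericallyComputes C (asymJoin A B)) :
    TuringComputes C A := by
  classical
  obtain ⟨φ, hφ, hdens, hval, h1, h0⟩ := h
  have hφ' : RecIn (fun n => Part.some (chiF C n)) φ := hφ
  obtain ⟨g, hg, hmono, hsound, hcompl⟩ := recIn_tracks hφ'
  obtain ⟨c, hc⟩ := Nat.Partrec.Code.exists_code.1 hg
  -- main value computation
  have main : ∀ m : ℕ, FF C c m = Part.some (if m ∈ A then 1 else 0) := by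
    intro m
    -- a witness for the search
    have hwit : ∃ t : ℕ, W1 c (Nat.pair (Nat.pair m t)
        (segN (chiF C) t.unpair.2.unpair.1)) = 0 := by
      obtain ⟨k, hk⟩ := density1_meets hdens m
      obtain ⟨w, hw⟩ := Part.dom_iff_mem.1 hk
      obtain ⟨s₁, hs₁⟩ := hcompl _ _ hw
      rw [← hc] at hs₁
      obtain ⟨s₂, hs₂⟩ := EV_complete.1 hs₁
      refine ⟨Nat.pair k (Nat.pair s₁ s₂), ?_⟩
      simp only [W1, Nat.unpair_pair]
      rw [Option.mem_def.1 hs₂]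
      rfl
    obtain ⟨t₀, ht₀⟩ := hwit
    -- domain of the search
    have hRdom : (RF C c m).Dom := by
      rw [RF]; apply Nat.rfind_dom.2
      refine ⟨t₀, ?_, ?_⟩
      · simp only [TstF, Nat.unpair_pair, Part.map_some]
        simp [ht₀]
      · intro j _
        simp [TstF]
    obtain ⟨t, ht⟩ := Part.dom_iff_mem.1 hRdom
    have htspec := Nat.rfind_spec ht
    simp only [TstF, Nat.unpair_pair, Part.map_some, Part.mem_some_iff] at htspec
    -- value found at t
    have hW1 : W1 c (Nat.pair (Nat.pair m t) (segN (chiF C) t.unpair.2.unpair.1)) = 0 := by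
      by_contra hcon
      simp [hcon] at htspec
    have hisSome : (EV t.unpair.2.unpair.2 c
        (Nat.pair ((2 * t.unpair.1 + 3) * 2 ^ m)
          (segN (chiF C) t.unpair.2.unpair.1))).isSome := by
      by_contra hcon
      simp only [W1, Nat.unpair_pair] at hW1
      rw [Bool.cond_eq_ite] at hW1
      rw [if_neg (by simpa using hcon)] at hW1
      omega
    obtain ⟨v, hv⟩ := Option.isSome_iff_exists.1 hisSome
    -- the found value is a correct answer about φ at a good point
    set n₀ := (2 * t.unpair.1 + 3) * 2 ^ m with hn₀
    have hvφ : v ∈ φ n₀ := by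
      apply hsound _ t.unpair.2.unpair.1
      rw [← hc]
      exact EV_sound (Option.mem_def.2 hv)
    have hvcorrect : v = (if m ∈ A then 1 else 0) := by
      rcases hval _ _ hvφ with rfl | rfl
      · -- v = 0 : n₀ ∉ asymJoin
        have hnot := h0 _ hvφ
        rw [if_neg ?_]
        intro hmA
        exact hnot (Or.inl ⟨⟨Nat.one_le_iff_ne_zero.2 (nn_ne_zero m _),
          by rw [hn₀, nn_padic]; exact hmA⟩, nn_not_powTwo m _⟩)
      · -- v = 1 : n₀ ∈ asymJoin
        have hmem := h1 _ hvφ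
        rw [if_pos ?_]
        rcases hmem with ⟨⟨_, hv2⟩, _⟩ | ⟨e, _, he⟩
        · rw [hn₀, nn_padic] at hv2; exact hv2
        · exact absurd ⟨e, he⟩ (nn_not_powTwo m _)
    -- compute FF
    rw [Part.eq_some_iff]
    unfold FF
    erw [Part.bind_eq_bind, Part.mem_bind_iff]
    refine ⟨Nat.pair m t, ?_, ?_⟩
    · rw [mem_pairSeq]
      exact ⟨m, Part.mem_some m, t, ht, rfl⟩
    · simp only [VF, Nat.unpair_pair, Part.mem_some_iff]
      rw [← hvcorrect]
      simp only [W2, Nat.unpair_pair]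
      rw [hv]
      rfl
  exact recIn_of_eq (FF_recIn C c) fun m => by rw [main m]; rfl


end AJP

/-- A set `C` generically computes the asymmetric join of `A` and `B` if and only if
`C` Turing-computes `A`. -/
theorem genericallyComputes_asymJoin_iff (A B C : Set ℕ) :
    GenericallyComputes C (asymJoin A B) ↔ TuringComputes C A :=
  ⟨AJP.hard_dir, AJP.easy_dir⟩
end
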